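/- arXiv:2001.02345 — 10 statements merged into one kernel-verified Lean document; each statement's English description precedes it below -/
import Mathlib

section
/- Let H be an n×n block matrix with k×k complex blocks H_{ij} (i.e. H ∈ M_n(M_k)) that is positive semidefinite. Then the n×n matrix [det H_{ij}]_{i,j=1}^n (which is positive semidefinite) satisfies det([det H_{ij}]_{i,j=1}^n) ≥ det H. (Thompson's inequality.) -/
open ComplexOrder

set_option linter.unusedSectionVars false

namespace ThompsonAux

open Finset Matrix

variable {α β δ : Type*} [Fintype α] [DecidableEq α] [Fintype β] [DecidableEq β]
  [Fintype δ] [DecidableEq δ]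

local notation "ε " σ:arg => ((Equiv.Perm.sign σ : ℤ) : ℂ)

lemma det_submatrix_eq (P : Matrix α δ ℂ) (g : δ → α) :
    (P.submatrix g id).det = ∑ σ : Equiv.Perm δ, ε σ * ∏ i, P (g i) (σ i) := by
  rw [← Matrix.det_transpose, Matrix.det_apply']
  exact Finset.sum_congr rfl fun σ _ => rfl

lemma detPQ (P Q : Matrix α δ ℂ) :
    (Pᴴ * Q).det = ∑ g : δ → α, star (P.submatrix g id).det * ∏ i, Q (g i) i := by
  rw [Matrix.det_apply']
  have h1 : ∀ σ : Equiv.Perm δ, ∏ i, (Pᴴ * Q) (σ i) i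
      = ∑ g : δ → α, (∏ i, star (P (g i) (σ i))) * ∏ i, Q (g i) i := by
    intro σ
    have h0 : ∀ i : δ, (Pᴴ * Q) (σ i) i = ∑ a : α, star (P a (σ i)) * Q a i := by
      intro i; simp [Matrix.mul_apply, Matrix.conjTranspose_apply]
    rw [Finset.prod_congr rfl fun i _ => h0 i, Finset.prod_univ_sum, Fintype.piFinset_univ]
    exact Finset.sum_congr rfl fun g _ => Finset.prod_mul_distrib
  calc ∑ σ : Equiv.Perm δ, ε σ * ∏ i, (Pᴴ * Q) (σ i) i
      = ∑ σ : Equiv.Perm δ, ∑ g : δ → α,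
          (ε σ * ∏ i, star (P (g i) (σ i))) * ∏ i, Q (g i) i := by
        refine Finset.sum_congr rfl fun σ _ => ?_
        rw [h1 σ, Finset.mul_sum]
        exact Finset.sum_congr rfl fun g _ => by ring
    _ = ∑ g : δ → α, ∑ σ : Equiv.Perm δ,
          (ε σ * ∏ i, star (P (g i) (σ i))) * ∏ i, Q (g i) i := Finset.sum_comm
    _ = ∑ g : δ → α, star (P.submatrix g id).det * ∏ i, Q (g i) i := by
        refine Finset.sum_congr rfl fun g _ => ?_
        rw [← Finset.sum_mul]
        congr 1
        rw [det_submatrix_eq, star_sum]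
        refine Finset.sum_congr rfl fun σ _ => ?_
        rw [star_mul', star_prod]
        · simp
    _ = _ := rfl

lemma cauchy_binet (P Q : Matrix α δ ℂ) :
    ((Fintype.card δ).factorial : ℂ) * (Pᴴ * Q).det
      = ∑ g : δ → α, star (P.submatrix g id).det * (Q.submatrix g id).det := by
  have key : ∀ (σ : Equiv.Perm δ) (g : δ → α),
      star ((P.submatrix (g ∘ σ) id)).det * ∏ i, Q (g (σ i)) i
        = ε σ * (star (P.submatrix g id).det * ∏ i, Q (g i) (σ⁻¹ i)) := by
    intro σ g
    have h1 : P.submatrix (g ∘ σ) id = (P.submatrix g id).submatrix σ id := by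
      rw [Matrix.submatrix_submatrix]; rfl
    have h2 : (∏ i, Q (g (σ i)) i) = ∏ i, Q (g i) (σ⁻¹ i) := by
      have := Equiv.prod_comp σ (fun j => Q (g j) (σ⁻¹ j))
      simpa using this
    rw [h1, Matrix.det_permute, h2, star_mul']
    have h3 : star ((Equiv.Perm.sign σ : ℤ) : ℂ) = ε σ := by
      simp
    rw [h3]; ring
  have perm_ver : ∀ σ : Equiv.Perm δ, (Pᴴ * Q).det
      = ∑ g : δ → α, ε σ * (star (P.submatrix g id).det * ∏ i, Q (g i) (σ⁻¹ i)) := by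
    intro σ
    rw [detPQ P Q]
    have hbij : Function.Bijective (fun g : δ → α => g ∘ σ) :=
      (Equiv.arrowCongr σ.symm (Equiv.refl α)).bijective
    refine (Fintype.sum_bijective (fun g : δ → α => g ∘ σ) hbij _ _ (fun g => rfl)).symm.trans ?_
    exact Finset.sum_congr rfl fun g _ => key σ g
  calc ((Fintype.card δ).factorial : ℂ) * (Pᴴ * Q).det
      = ∑ _σ : Equiv.Perm δ, (Pᴴ * Q).det := by
        rw [Finset.sum_const, Finset.card_univ, Fintype.card_perm, nsmul_eq_mul]
    _ = ∑ σ : Equiv.Perm δ, ∑ g : δ → α,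
          ε σ * (star (P.submatrix g id).det * ∏ i, Q (g i) (σ⁻¹ i)) :=
        Finset.sum_congr rfl fun σ _ => perm_ver σ
    _ = ∑ g : δ → α, ∑ σ : Equiv.Perm δ,
          ε σ * (star (P.submatrix g id).det * ∏ i, Q (g i) (σ⁻¹ i)) := Finset.sum_comm
    _ = ∑ g : δ → α, star (P.submatrix g id).det * (Q.submatrix g id).det := by
        refine Finset.sum_congr rfl fun g _ => ?_
        have hinv : ∑ σ : Equiv.Perm δ, ε σ * ∏ i, Q (g i) (σ⁻¹ i)
            = ∑ σ : Equiv.Perm δ, ε σ * ∏ i, Q (g i) (σ i) := by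
          refine Fintype.sum_bijective (fun σ : Equiv.Perm δ => σ⁻¹)
            (Equiv.inv (Equiv.Perm δ)).bijective _ _ (fun σ => ?_)
          simp
        calc ∑ σ : Equiv.Perm δ, ε σ * (star (P.submatrix g id).det * ∏ i, Q (g i) (σ⁻¹ i))
            = star (P.submatrix g id).det * ∑ σ : Equiv.Perm δ, ε σ * ∏ i, Q (g i) (σ⁻¹ i) := by
              rw [Finset.mul_sum]
              exact Finset.sum_congr rfl fun σ _ => by ring
          _ = star (P.submatrix g id).det * (Q.submatrix g id).det := by
              rw [hinv, ← det_submatrix_eq]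

lemma gram_posSemidef {ι γ : Type*} [Fintype ι] [Fintype γ] [DecidableEq γ]
    (v : ι → γ → ℂ) (T : Finset γ) :
    (Matrix.of fun i j => ∑ g ∈ T, star (v i g) * v j g).PosSemidef := by
  have key : (Matrix.of fun i j => ∑ g ∈ T, star (v i g) * v j g)
      = (Matrix.of fun (g : γ) (i : ι) => if g ∈ T then v i g else 0)ᴴ
        * (Matrix.of fun (g : γ) (i : ι) => if g ∈ T then v i g else 0) := by
    ext i j
    simp only [Matrix.mul_apply, Matrix.conjTranspose_apply, Matrix.of_apply]
    have h1 : ∀ g : γ, star (if g ∈ T then v i g else 0) * (if g ∈ T then v j g else 0)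
        = if g ∈ T then star (v i g) * v j g else 0 := by
      intro g; split_ifs <;> simp
    rw [Finset.sum_congr rfl fun g _ => h1 g, Finset.sum_ite_mem, Finset.univ_inter]
  rw [key]
  exact Matrix.posSemidef_conjTranspose_mul_self _

lemma posSemidef_of_smul {ι : Type*} [Fintype ι] {M : Matrix ι ι ℂ} {c : ℝ}
    (hc : 0 < c) (h : (((c : ℂ)) • M).PosSemidef) : M.PosSemidef := by
  have hc' : ((c : ℂ)) ≠ 0 := by exact_mod_cast hc.ne'
  refine Matrix.PosSemidef.of_dotProduct_mulVec_nonneg ?_ ?_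
  · have h1 := h.1
    rw [Matrix.IsHermitian, Matrix.conjTranspose_smul] at h1
    have h2 : (c : ℂ) • Mᴴ = (c : ℂ) • M := by
      simpa [Complex.star_def, Complex.conj_ofReal] using h1
    exact smul_right_injective (Matrix ι ι ℂ) hc' h2
  · intro x
    have h2 := h.dotProduct_mulVec_nonneg x
    rw [Matrix.smul_mulVec, dotProduct_smul] at h2
    have h3 : (0:ℂ) ≤ ((c⁻¹ : ℝ) : ℂ) * ((c : ℂ) • (star x ⬝ᵥ M *ᵥ x)) :=
      mul_nonneg (Complex.zero_le_real.mpr (by positivity)) h2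
    rw [smul_eq_mul, ← mul_assoc] at h3
    rw [show ((c⁻¹:ℝ):ℂ) * (c:ℂ) = 1 by push_cast; field_simp] at h3
    simpa using h3

lemma psd_eq_conjTranspose_mul_self {ι : Type*} [Fintype ι] {M : Matrix ι ι ℂ}
    (h : M.PosSemidef) : ∃ B : Matrix ι ι ℂ, M = Bᴴ * B := by
  classical
  open scoped MatrixOrder in exact CStarAlgebra.nonneg_iff_eq_star_mul_self.mp h.nonneg

/-- determinant of a PSD matrix is a nonneg real. -/

lemma psd_det_real {ι : Type*} [Fintype ι] [DecidableEq ι] {M : Matrix ι ι ℂ}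
    (h : M.PosSemidef) : ∃ c : ℝ, 0 ≤ c ∧ M.det = (c : ℂ) := by
  obtain ⟨B, rfl⟩ := psd_eq_conjTranspose_mul_self h
  refine ⟨Complex.normSq B.det, Complex.normSq_nonneg _, ?_⟩
  rw [Matrix.det_mul, Matrix.det_conjTranspose, Complex.normSq_eq_conj_mul_self]
  rfl

/-- the matrix of determinants of blocks of a PSD matrix is PSD. -/

lemma detBlocks_posSemidef {ι : Type*} [Fintype ι] [DecidableEq ι] {k : ℕ}
    {H : Matrix (ι × Fin k) (ι × Fin k) ℂ} (hH : H.PosSemidef) :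
    (Matrix.of fun i j : ι => (Matrix.of fun l m : Fin k => H (i, l) (j, m)).det).PosSemidef := by
  obtain ⟨M, rfl⟩ := psd_eq_conjTranspose_mul_self hH
  set P : ι → Matrix (ι × Fin k) (Fin k) ℂ := fun i => M.submatrix id (fun l => (i, l)) with hP
  have hblk : ∀ i j : ι, (Matrix.of fun l m : Fin k => (Mᴴ * M) (i, l) (j, m))
      = (P i)ᴴ * (P j) := by
    intro i j
    ext l m
    simp [Matrix.mul_apply, Matrix.conjTranspose_apply, hP]
  apply posSemidef_of_smul (c := (k.factorial : ℝ)) (by positivity)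
  have heq : ((k.factorial : ℝ) : ℂ) • (Matrix.of fun i j : ι =>
        (Matrix.of fun l m : Fin k => (Mᴴ * M) (i, l) (j, m)).det)
      = Matrix.of fun i j : ι => ∑ g : Fin k → (ι × Fin k),
          star (((P i).submatrix g id).det) * (((P j).submatrix g id).det) := by
    ext i j
    simp only [Matrix.smul_apply, Matrix.of_apply, smul_eq_mul]
    rw [hblk i j]
    push_cast
    rw [← cauchy_binet (P i) (P j)]
    simp [Fintype.card_fin]
  rw [heq]
  exact gram_posSemidef (fun i g => ((P i).submatrix g id).det) Finset.univ

lemma filter_left_eq_image :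
    Finset.univ.filter (fun g : δ → α ⊕ β => ∀ m, (g m).isLeft)
      = Finset.image (fun g' : δ → α => Sum.inl ∘ g') Finset.univ := by
  ext g
  simp only [Finset.mem_filter, Finset.mem_univ, true_and, Finset.mem_image]
  constructor
  · intro h
    have h' : ∀ m, ∃ a, g m = Sum.inl a := fun m => Sum.isLeft_iff.mp (h m)
    choose g' hg' using h'
    exact ⟨g', funext fun m => (hg' m).symm⟩
  · rintro ⟨g', rfl⟩ m
    simp

lemma sum_filter_left (U V : Matrix (α ⊕ β) δ ℂ) :
    ∑ g ∈ Finset.univ.filter (fun g : δ → α ⊕ β => ∀ m, (g m).isLeft),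
        star ((U.submatrix g id).det) * (V.submatrix g id).det
      = ((Fintype.card δ).factorial : ℂ)
          * ((U.submatrix Sum.inl id)ᴴ * (V.submatrix Sum.inl id)).det := by
  have hinj : ∀ g₁ ∈ (Finset.univ : Finset (δ → α)), ∀ g₂ ∈ (Finset.univ : Finset (δ → α)),
      Sum.inl ∘ g₁ = (Sum.inl ∘ g₂ : δ → α ⊕ β) → g₁ = g₂ :=
    fun g₁ _ g₂ _ h => funext fun m => Sum.inl_injective (congrFun h m)
  rw [cauchy_binet, filter_left_eq_image, Finset.sum_image hinj]
  refine Finset.sum_congr rfl fun g' _ => ?_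
  rw [Matrix.submatrix_submatrix, Matrix.submatrix_submatrix]
  rfl

lemma star_mul_self_re' (z : ℂ) : (star z).re * z.re - (star z).im * z.im = Complex.normSq z := by
  simp [Complex.star_def, Complex.normSq_apply]
  try ring

/-- Monotonicity of determinant: `det X ≤ det (X + Y)` for `X, Y` PSD. -/

lemma det_re_le_det_add {ι : Type*} [Fintype ι] [DecidableEq ι] {X Y : Matrix ι ι ℂ}
    (hX : X.PosSemidef) (hY : Y.PosSemidef) : X.det.re ≤ (X + Y).det.re := by
  obtain ⟨A, rfl⟩ := psd_eq_conjTranspose_mul_self hX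
  obtain ⟨B, rfl⟩ := psd_eq_conjTranspose_mul_self hY
  set T : Matrix (ι ⊕ ι) ι ℂ :=
    Matrix.of fun s l => Sum.elim (fun a => A a l) (fun b => B b l) s with hT
  have hTl : T.submatrix Sum.inl id = A := rfl
  have hTr : T.submatrix Sum.inr id = B := rfl
  have hstack : Aᴴ * A + Bᴴ * B = Tᴴ * T := by
    ext l m
    simp only [Matrix.add_apply, Matrix.mul_apply, Matrix.conjTranspose_apply,
      Fintype.sum_sum_type]
    simp [hT]
  have hkey := cauchy_binet T T
  -- real parts
  have hre : ((Fintype.card ι).factorial : ℝ) * (Tᴴ * T).det.re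
      = ∑ g : ι → ι ⊕ ι, Complex.normSq ((T.submatrix g id).det) := by
    have := congrArg Complex.re hkey
    simp only [Complex.mul_re, Complex.natCast_re, Complex.natCast_im, zero_mul, sub_zero,
      Complex.re_sum] at this
    rw [this]
    exact Finset.sum_congr rfl fun g _ => star_mul_self_re' _
  have hreA : ((Fintype.card ι).factorial : ℝ) * (Aᴴ * A).det.re
      = ∑ g ∈ Finset.univ.filter (fun g : ι → ι ⊕ ι => ∀ m, (g m).isLeft),
          Complex.normSq ((T.submatrix g id).det) := by
    have h1 := sum_filter_left T T
    rw [hTl] at h1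
    have := congrArg Complex.re h1.symm
    simp only [Complex.mul_re, Complex.natCast_re, Complex.natCast_im, zero_mul, sub_zero,
      Complex.re_sum] at this
    rw [this]
    exact Finset.sum_congr rfl fun g _ => star_mul_self_re' _
  have hmono : ((Fintype.card ι).factorial : ℝ) * (Aᴴ * A).det.re
      ≤ ((Fintype.card ι).factorial : ℝ) * (Tᴴ * T).det.re := by
    rw [hre, hreA]
    exact Finset.sum_le_sum_of_subset_of_nonneg (Finset.filter_subset _ _)
      (fun g _ _ => Complex.normSq_nonneg _)
  rw [hstack]
  have hfac : (0:ℝ) < ((Fintype.card ι).factorial : ℝ) := by positivity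
  exact le_of_mul_le_mul_left hmono hfac

/-- The key superadditivity defect is PSD. -/

lemma delta_posSemidef {ι : Type*} [Fintype ι] [DecidableEq ι] {k : ℕ} (hk : 0 < k)
    {S R : Matrix (ι × Fin k) (ι × Fin k) ℂ} (hS : S.PosSemidef) (hR : R.PosSemidef) :
    (Matrix.of fun i j : ι =>
      (Matrix.of fun l m : Fin k => S (i, l) (j, m) + R (i, l) (j, m)).det
      - (Matrix.of fun l m : Fin k => S (i, l) (j, m)).det
      - (Matrix.of fun l m : Fin k => R (i, l) (j, m)).det).PosSemidef := by
  obtain ⟨P, rfl⟩ := psd_eq_conjTranspose_mul_self hS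
  obtain ⟨Q, rfl⟩ := psd_eq_conjTranspose_mul_self hR
  set T : ι → Matrix ((ι × Fin k) ⊕ (ι × Fin k)) (Fin k) ℂ :=
    fun i => Matrix.of fun s l => Sum.elim (fun a => P a (i, l)) (fun b => Q b (i, l)) s with hT
  have hTl : ∀ i, (T i).submatrix Sum.inl id = P.submatrix id (fun l => (i, l)) := fun i => rfl
  have hTr : ∀ i, (T i).submatrix Sum.inr id = Q.submatrix id (fun l => (i, l)) := fun i => rfl
  have hblkS : ∀ i j : ι, (Matrix.of fun l m : Fin k => (Pᴴ * P) (i, l) (j, m))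
      = (P.submatrix id (fun l => (i, l)))ᴴ * (P.submatrix id (fun l => (j, l))) := by
    intro i j; ext l m
    simp [Matrix.mul_apply, Matrix.conjTranspose_apply]
  have hblkR : ∀ i j : ι, (Matrix.of fun l m : Fin k => (Qᴴ * Q) (i, l) (j, m))
      = (Q.submatrix id (fun l => (i, l)))ᴴ * (Q.submatrix id (fun l => (j, l))) := by
    intro i j; ext l m
    simp [Matrix.mul_apply, Matrix.conjTranspose_apply]
  have hblkT : ∀ i j : ι, (Matrix.of fun l m : Fin k =>
        (Pᴴ * P) (i, l) (j, m) + (Qᴴ * Q) (i, l) (j, m)) = (T i)ᴴ * (T j) := by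
    intro i j; ext l m
    simp only [Matrix.of_apply, Matrix.mul_apply, Matrix.conjTranspose_apply,
      Fintype.sum_sum_type]
    simp [hT]
  -- the three-way split of the function space
  have hfilter : ((Finset.univ.filter (fun g : Fin k → (ι × Fin k) ⊕ (ι × Fin k) => ¬ ∀ m, (g m).isLeft)).filter
        (fun g => ∀ m, (g m).isRight))
      = Finset.univ.filter (fun g : Fin k → (ι × Fin k) ⊕ (ι × Fin k) => ∀ m, (g m).isRight) := by
    ext g
    simp only [Finset.mem_filter, Finset.mem_univ, true_and]
    constructor
    · rintro ⟨_, h⟩; exact h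
    · intro h
      refine ⟨fun hall => ?_, h⟩
      have h1 := hall ⟨0, hk⟩
      have h2 := h ⟨0, hk⟩
      rw [Sum.isLeft_iff] at h1
      rw [Sum.isRight_iff] at h2
      obtain ⟨a, ha⟩ := h1
      obtain ⟨b, hb⟩ := h2
      rw [ha] at hb
      exact Sum.inl_ne_inr hb
  have hLimg : Finset.univ.filter (fun g : Fin k → (ι × Fin k) ⊕ (ι × Fin k) => ∀ m, (g m).isLeft)
      = Finset.image (fun g' : Fin k → ι × Fin k => Sum.inl ∘ g') Finset.univ := by
    ext g
    simp only [Finset.mem_filter, Finset.mem_univ, true_and, Finset.mem_image]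
    constructor
    · intro h
      choose g' hg' using fun m => Sum.isLeft_iff.mp (h m)
      exact ⟨g', funext fun m => (hg' m).symm⟩
    · rintro ⟨g', rfl⟩ m
      simp
  have hRimg : Finset.univ.filter (fun g : Fin k → (ι × Fin k) ⊕ (ι × Fin k) => ∀ m, (g m).isRight)
      = Finset.image (fun g' : Fin k → ι × Fin k => Sum.inr ∘ g') Finset.univ := by
    ext g
    simp only [Finset.mem_filter, Finset.mem_univ, true_and, Finset.mem_image]
    constructor
    · intro h
      choose g' hg' using fun m => Sum.isRight_iff.mp (h m)
      exact ⟨g', funext fun m => (hg' m).symm⟩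
    · rintro ⟨g', rfl⟩ m
      simp
  have hinjL : ∀ g₁ ∈ (Finset.univ : Finset (Fin k → ι × Fin k)), ∀ g₂ ∈ (Finset.univ : Finset (Fin k → ι × Fin k)),
      Sum.inl ∘ g₁ = (Sum.inl ∘ g₂ : Fin k → (ι × Fin k) ⊕ (ι × Fin k)) → g₁ = g₂ :=
    fun g₁ _ g₂ _ h => funext fun m => Sum.inl_injective (congrFun h m)
  have hinjR : ∀ g₁ ∈ (Finset.univ : Finset (Fin k → ι × Fin k)), ∀ g₂ ∈ (Finset.univ : Finset (Fin k → ι × Fin k)),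
      Sum.inr ∘ g₁ = (Sum.inr ∘ g₂ : Fin k → (ι × Fin k) ⊕ (ι × Fin k)) → g₁ = g₂ :=
    fun g₁ _ g₂ _ h => funext fun m => Sum.inr_injective (congrFun h m)
  have hsplit : ∀ i j : ι, ((k.factorial : ℂ)) * ((T i)ᴴ * T j).det
      = (k.factorial : ℂ) * ((P.submatrix id (fun l => (i, l)))ᴴ * (P.submatrix id (fun l => (j, l)))).det
        + (k.factorial : ℂ) * ((Q.submatrix id (fun l => (i, l)))ᴴ * (Q.submatrix id (fun l => (j, l)))).det
        + ∑ g ∈ (Finset.univ.filter (fun g : Fin k → (ι × Fin k) ⊕ (ι × Fin k) => ¬ ∀ m, (g m).isLeft)).filter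
            (fun g => ¬ ∀ m, (g m).isRight),
            star (((T i).submatrix g id).det) * (((T j).submatrix g id).det) := by
    intro i j
    have hL : ∑ g ∈ Finset.univ.filter (fun g : Fin k → (ι × Fin k) ⊕ (ι × Fin k) => ∀ m, (g m).isLeft),
        star (((T i).submatrix g id).det) * (((T j).submatrix g id).det)
        = (k.factorial : ℂ) * ((P.submatrix id (fun l => (i, l)))ᴴ * (P.submatrix id (fun l => (j, l)))).det := by
      rw [hLimg, Finset.sum_image hinjL]
      have hcb := cauchy_binet (P.submatrix id (fun l => (i, l))) (P.submatrix id (fun l => (j, l)))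
      rw [Fintype.card_fin] at hcb
      exact (Finset.sum_congr rfl fun g' _ => rfl).trans hcb.symm
    have hR : ∑ g ∈ Finset.univ.filter (fun g : Fin k → (ι × Fin k) ⊕ (ι × Fin k) => ∀ m, (g m).isRight),
        star (((T i).submatrix g id).det) * (((T j).submatrix g id).det)
        = (k.factorial : ℂ) * ((Q.submatrix id (fun l => (i, l)))ᴴ * (Q.submatrix id (fun l => (j, l)))).det := by
      rw [hRimg, Finset.sum_image hinjR]
      have hcb := cauchy_binet (Q.submatrix id (fun l => (i, l))) (Q.submatrix id (fun l => (j, l)))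
      rw [Fintype.card_fin] at hcb
      exact (Finset.sum_congr rfl fun g' _ => rfl).trans hcb.symm
    have hcbT := cauchy_binet (T i) (T j)
    rw [Fintype.card_fin] at hcbT
    rw [hcbT]
    rw [← Finset.sum_filter_add_sum_filter_not Finset.univ
      (fun g : Fin k → (ι × Fin k) ⊕ (ι × Fin k) => ∀ m, (g m).isLeft)
      (fun g => star (((T i).submatrix g id).det) * (((T j).submatrix g id).det))]
    rw [← Finset.sum_filter_add_sum_filter_not
      (Finset.univ.filter (fun g : Fin k → (ι × Fin k) ⊕ (ι × Fin k) => ¬ ∀ m, (g m).isLeft))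
      (fun g => ∀ m, (g m).isRight)
      (fun g => star (((T i).submatrix g id).det) * (((T j).submatrix g id).det))]
    rw [hfilter, hL, hR]
    ring
  -- conclude
  apply posSemidef_of_smul (c := (k.factorial : ℝ)) (by positivity)
  have heq : ((k.factorial : ℝ) : ℂ) • (Matrix.of fun i j : ι =>
      (Matrix.of fun l m : Fin k => (Pᴴ * P) (i, l) (j, m) + (Qᴴ * Q) (i, l) (j, m)).det
      - (Matrix.of fun l m : Fin k => (Pᴴ * P) (i, l) (j, m)).det
      - (Matrix.of fun l m : Fin k => (Qᴴ * Q) (i, l) (j, m)).det)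
      = Matrix.of fun i j : ι =>
          ∑ g ∈ (Finset.univ.filter (fun g : Fin k → (ι × Fin k) ⊕ (ι × Fin k) => ¬ ∀ m, (g m).isLeft)).filter
            (fun g => ¬ ∀ m, (g m).isRight),
            star (((T i).submatrix g id).det) * (((T j).submatrix g id).det) := by
    ext i j
    simp only [Matrix.smul_apply, Matrix.of_apply, smul_eq_mul]
    rw [hblkS i j, hblkR i j, hblkT i j]
    push_cast
    linear_combination hsplit i j
  rw [heq]
  exact gram_posSemidef (fun i g => (((T i).submatrix g id).det)) _

def splitEquiv (n k : ℕ) : (Fin k ⊕ (Fin n × Fin k)) ≃ (Fin (n + 1) × Fin k) where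
  toFun := Sum.elim (fun l => ((0 : Fin (n + 1)), l)) (fun q => (q.1.succ, q.2))
  invFun p := Fin.cases (Sum.inl p.2) (fun i => Sum.inr (i, p.2)) p.1
  left_inv := by rintro (l | ⟨i, l⟩) <;> simp
  right_inv := by
    rintro ⟨i, l⟩
    induction i using Fin.cases <;> simp

def succEquiv (n : ℕ) : (Unit ⊕ Fin n) ≃ Fin (n + 1) where
  toFun := Sum.elim (fun _ => 0) Fin.succ
  invFun i := Fin.cases (Sum.inl ()) (fun j => Sum.inr j) i
  left_inv := by rintro (⟨⟩ | i) <;> simp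
  right_inv := by
    intro i
    induction i using Fin.cases <;> simp

end ThompsonAux

open Matrix ThompsonAux

/-- **Thompson's inequality.** If `H ∈ M_n(M_k)` is positive semidefinite, then
`det([det H_{ij}]_{i,j=1}^n) ≥ det H` (both determinants are nonnegative reals,
compared via their real parts). -/
theorem thompson_det_ineq {n k : ℕ} (hk : 0 < k)
    (H : Matrix (Fin n × Fin k) (Fin n × Fin k) ℂ) (hH : H.PosSemidef) :
    (Matrix.det (Matrix.of fun i j : Fin n =>
        (Matrix.of fun l m : Fin k => H (i, l) (j, m)).det)).re ≥ H.det.re := by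
  induction n with
  | zero =>
    rw [Matrix.det_isEmpty, Matrix.det_isEmpty]
  | succ n IH =>
    -- blocks of H
    set Ab : Matrix (Fin k) (Fin k) ℂ := Matrix.of fun l m => H (0, l) (0, m) with hAb
    set Bb : Matrix (Fin k) (Fin n × Fin k) ℂ :=
      Matrix.of fun l q => H (0, l) (q.1.succ, q.2) with hBb
    set Db : Matrix (Fin n × Fin k) (Fin n × Fin k) ℂ :=
      Matrix.of fun p q => H (p.1.succ, p.2) (q.1.succ, q.2) with hDb
    have hentry : ∀ (a b : Fin (n+1) × Fin k), H a b = star (H b a) :=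
      fun a b => (hH.1.apply a b).symm
    have hH' : (H.submatrix (splitEquiv n k) (splitEquiv n k)).PosSemidef := hH.submatrix _
    have hHb : H.submatrix (splitEquiv n k) (splitEquiv n k) = Matrix.fromBlocks Ab Bb Bbᴴ Db := by
      ext a b
      rcases a with l | p <;> rcases b with m | q
      · rfl
      · rfl
      · show H _ _ = star (Bb _ _)
        rw [hBb]
        exact hentry _ _
      · rfl
    have hdetH : (H.submatrix (splitEquiv n k) (splitEquiv n k)).det = H.det :=
      Matrix.det_submatrix_equiv_self _ _
    have hAps : Ab.PosSemidef := hH.submatrix (fun l : Fin k => ((0 : Fin (n + 1)), l))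
    by_cases hA0 : Ab.det = 0
    · -- degenerate case : `det H = 0` and LHS is nonnegative
      have hDDpsd := detBlocks_posSemidef hH
      obtain ⟨c, hc0, hceq⟩ := psd_det_real hDDpsd
      have hH0 : H.det = 0 := by
        obtain ⟨x, hx0, hAx⟩ := Matrix.exists_mulVec_eq_zero_iff.mpr hA0
        set xh : Fin (n + 1) × Fin k → ℂ := fun p => if p.1 = 0 then x p.2 else 0 with hxh
        have hxhne : xh ≠ 0 := by
          intro hcon
          apply hx0
          ext l
          have := congrFun hcon (0, l)
          simpa [hxh] using this
        have hquad : star xh ⬝ᵥ H *ᵥ xh = star x ⬝ᵥ Ab *ᵥ x := by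
          simp only [dotProduct, Matrix.mulVec, Pi.star_apply, hxh, hAb,
            Fintype.sum_prod_type, Matrix.of_apply, mul_ite, mul_zero, ite_mul, zero_mul,
            apply_ite (star : ℂ → ℂ), star_zero, Finset.sum_ite_eq', Finset.mem_univ, if_true,
            Finset.mul_sum, Finset.sum_ite_irrel, Finset.sum_const_zero]
        have hmv : H *ᵥ xh = 0 := by
          refine (hH.dotProduct_mulVec_zero_iff xh).mp ?_
          rw [hquad, hAx, dotProduct_zero]
        exact Matrix.exists_mulVec_eq_zero_iff.mp ⟨xh, hxhne, hmv⟩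
      rw [hH0]
      rw [show (Matrix.det (Matrix.of fun i j : Fin (n+1) =>
        (Matrix.of fun l m : Fin k => H (i, l) (j, m)).det)) = (c : ℂ) from hceq]
      simpa using hc0
    · -- main case: `Ab` invertible
      haveI hInv : Invertible Ab := Ab.invertibleOfIsUnitDet (isUnit_iff_ne_zero.mpr hA0)
      set Rm : Matrix (Fin n × Fin k) (Fin n × Fin k) ℂ := Bbᴴ * Ab⁻¹ * Bb with hRm
      set Sm : Matrix (Fin n × Fin k) (Fin n × Fin k) ℂ := Db - Rm with hSm
      have hAbH : Abᴴ = Ab := hAps.1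
      have hAbiH : (Ab⁻¹)ᴴ = Ab⁻¹ := by rw [Matrix.conjTranspose_nonsing_inv, hAbH]
      have hAbi_psd : (Ab⁻¹).PosSemidef := by
        have h1 : ((Ab⁻¹)ᴴ * Ab * (Ab⁻¹)).PosSemidef := hAps.conjTranspose_mul_mul_same _
        rwa [hAbiH, Matrix.mul_assoc, Matrix.mul_nonsing_inv Ab (isUnit_iff_ne_zero.mpr hA0),
          Matrix.mul_one] at h1
      have hRpsd : Rm.PosSemidef := hAbi_psd.conjTranspose_mul_mul_same Bb
      have hSpsd : Sm.PosSemidef := by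
        have hcon : (Matrix.fromBlocks 1 (-(Ab⁻¹ * Bb)) 0 1)ᴴ
            * (Matrix.fromBlocks Ab Bb Bbᴴ Db) * (Matrix.fromBlocks 1 (-(Ab⁻¹ * Bb)) 0 1)
            = Matrix.fromBlocks Ab 0 0 Sm := by
          rw [Matrix.fromBlocks_conjTranspose]
          rw [Matrix.fromBlocks_multiply, Matrix.fromBlocks_multiply]
          rw [hSm, hRm]
          have e21 : -(Bbᴴ * Ab⁻¹ᴴ * Ab) + Bbᴴ = (0 : Matrix (Fin n × Fin k) (Fin k) ℂ) := by
            rw [hAbiH, Matrix.mul_assoc Bbᴴ,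
              Matrix.nonsing_inv_mul Ab (isUnit_iff_ne_zero.mpr hA0), Matrix.mul_one]
            abel
          rw [Matrix.fromBlocks_inj]
          refine ⟨by simp, by simp [Matrix.mul_inv_cancel_left_of_invertible], ?_, ?_⟩
          · simp only [Matrix.conjTranspose_neg, Matrix.conjTranspose_mul,
              Matrix.conjTranspose_one, Matrix.neg_mul, Matrix.one_mul, Matrix.mul_one,
              Matrix.mul_zero, Matrix.zero_mul, add_zero, zero_add]
            exact e21
          · simp only [Matrix.conjTranspose_neg, Matrix.conjTranspose_mul,
              Matrix.conjTranspose_one, Matrix.neg_mul, Matrix.one_mul, Matrix.mul_one,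
              Matrix.mul_zero, Matrix.zero_mul, add_zero, zero_add]
            rw [e21, Matrix.zero_mul, hAbiH]
            abel
        have h1 : ((Matrix.fromBlocks 1 (-(Ab⁻¹ * Bb)) 0 1)ᴴ
            * (Matrix.fromBlocks Ab Bb Bbᴴ Db) * (Matrix.fromBlocks 1 (-(Ab⁻¹ * Bb)) 0 1)).PosSemidef :=
          (hHb ▸ hH').conjTranspose_mul_mul_same _
        rw [hcon] at h1
        exact h1.submatrix Sum.inr
      have hdet1 : H.det = Ab.det * Sm.det := by
        rw [← hdetH, hHb, Matrix.det_fromBlocks₁₁, Matrix.invOf_eq_nonsing_inv]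
      -- the determinant matrix, in block form
      set DD : Matrix (Fin (n + 1)) (Fin (n + 1)) ℂ :=
        Matrix.of (fun i j : Fin (n + 1) =>
          (Matrix.of fun l m : Fin k => H (i, l) (j, m)).det) with hDD
      set rvec : Fin n → ℂ :=
        fun j => (Matrix.of fun l m : Fin k => H (0, l) (j.succ, m)).det with hrvec
      have hDD' : DD.submatrix (succEquiv n) (succEquiv n)
          = Matrix.fromBlocks (Matrix.of fun _ _ : Unit => Ab.det)
              (Matrix.of fun (_ : Unit) (j : Fin n) => rvec j)
              (Matrix.of fun (i : Fin n) (_ : Unit) => star (rvec i))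
              (Matrix.of fun i j : Fin n =>
                (Matrix.of fun l m : Fin k => H (i.succ, l) (j.succ, m)).det) := by
        ext a b
        rcases a with _ | i <;> rcases b with _ | j
        · rfl
        · rfl
        · show (Matrix.of fun l m : Fin k => H (i.succ, l) (0, m)).det = star (rvec i)
          rw [hrvec, ← Matrix.det_conjTranspose]
          congr 1
          ext l m
          exact hentry _ _
        · rfl
      haveI hInv1 : Invertible (Matrix.of fun _ _ : Unit => Ab.det) :=
        ⟨Matrix.of fun _ _ => (Ab.det)⁻¹,
          by ext i j; simp [Matrix.mul_apply, Matrix.one_apply, inv_mul_cancel₀ hA0],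
          by ext i j; simp [Matrix.mul_apply, Matrix.one_apply, mul_inv_cancel₀ hA0]⟩
      have hdetDD : DD.det = Ab.det *
          ((Matrix.of fun i j : Fin n =>
              (Matrix.of fun l m : Fin k => H (i.succ, l) (j.succ, m)).det)
            - (Matrix.of fun (i : Fin n) (_ : Unit) => star (rvec i))
              * ⅟(Matrix.of fun _ _ : Unit => Ab.det)
              * (Matrix.of fun (_ : Unit) (j : Fin n) => rvec j)).det := by
        rw [← Matrix.det_submatrix_equiv_self (succEquiv n) DD, hDD', Matrix.det_fromBlocks₁₁]
        congr 1
        rw [Matrix.det_unique]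
        rfl
      have hcorrEntry : ∀ i j : Fin n,
          ((Matrix.of fun (i : Fin n) (_ : Unit) => star (rvec i))
            * ⅟(Matrix.of fun _ _ : Unit => Ab.det)
            * (Matrix.of fun (_ : Unit) (j : Fin n) => rvec j)) i j
          = (Matrix.of fun l m : Fin k => Rm ((i, l)) ((j, m))).det := by
        intro i j
        have h1 : ((Matrix.of fun (i : Fin n) (_ : Unit) => star (rvec i))
            * ⅟(Matrix.of fun _ _ : Unit => Ab.det)
            * (Matrix.of fun (_ : Unit) (j : Fin n) => rvec j)) i j
            = star (rvec i) * (Ab.det)⁻¹ * rvec j := by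
          simp [Matrix.mul_apply]
        have hblk : (Matrix.of fun l m : Fin k => Rm ((i, l)) ((j, m)))
            = (Matrix.of fun l m : Fin k => H (0, l) (i.succ, m))ᴴ * Ab⁻¹
              * (Matrix.of fun l m : Fin k => H (0, l) (j.succ, m)) := by
          ext l m
          rw [hRm]
          simp [Matrix.mul_apply, Matrix.conjTranspose_apply, hBb]
        rw [h1, hblk, Matrix.det_mul, Matrix.det_mul, Matrix.det_conjTranspose,
          Matrix.det_nonsing_inv, Ring.inverse_eq_inv', hrvec]
      have hDbSR : ∀ (p q : Fin n × Fin k),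
          H (p.1.succ, p.2) (q.1.succ, q.2) = Sm p q + Rm p q := by
        intro p q
        rw [hSm, Matrix.sub_apply, sub_add_cancel, hDb]
        rfl
      have hfinal_blocks : (Matrix.of fun i j : Fin n =>
              (Matrix.of fun l m : Fin k => H (i.succ, l) (j.succ, m)).det)
            - (Matrix.of fun (i : Fin n) (_ : Unit) => star (rvec i))
              * ⅟(Matrix.of fun _ _ : Unit => Ab.det)
              * (Matrix.of fun (_ : Unit) (j : Fin n) => rvec j)
          = (Matrix.of fun i j : Fin n => (Matrix.of fun l m : Fin k => Sm (i, l) (j, m)).det)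
            + (Matrix.of fun i j : Fin n =>
                (Matrix.of fun l m : Fin k => Sm (i, l) (j, m) + Rm (i, l) (j, m)).det
                - (Matrix.of fun l m : Fin k => Sm (i, l) (j, m)).det
                - (Matrix.of fun l m : Fin k => Rm (i, l) (j, m)).det) := by
        ext i j
        simp only [Matrix.sub_apply, Matrix.add_apply, Matrix.of_apply]
        rw [hcorrEntry i j]
        have hdet_eq : (Matrix.of fun l m : Fin k => H (i.succ, l) (j.succ, m)).det
            = (Matrix.of fun l m : Fin k => Sm (i, l) (j, m) + Rm (i, l) (j, m)).det := by
          congr 1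
          ext l m
          exact hDbSR (i, l) (j, m)
        rw [hdet_eq]
        ring
      have hΔpsd := delta_posSemidef hk hSpsd hRpsd
      have hSDpsd := detBlocks_posSemidef hSpsd
      have hmono := det_re_le_det_add hSDpsd hΔpsd
      have hIH := IH Sm hSpsd
      obtain ⟨a, ha0, haeq⟩ := psd_det_real hAps
      have hchain : Sm.det.re
          ≤ ((Matrix.of fun i j : Fin n =>
                (Matrix.of fun l m : Fin k => Sm (i, l) (j, m)).det)
              + (Matrix.of fun i j : Fin n =>
                (Matrix.of fun l m : Fin k => Sm (i, l) (j, m) + Rm (i, l) (j, m)).det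
                - (Matrix.of fun l m : Fin k => Sm (i, l) (j, m)).det
                - (Matrix.of fun l m : Fin k => Rm (i, l) (j, m)).det)).det.re :=
        le_trans hIH hmono
      calc DD.det.re
          = a * ((Matrix.of fun i j : Fin n =>
                (Matrix.of fun l m : Fin k => Sm (i, l) (j, m)).det)
              + (Matrix.of fun i j : Fin n =>
                (Matrix.of fun l m : Fin k => Sm (i, l) (j, m) + Rm (i, l) (j, m)).det
                - (Matrix.of fun l m : Fin k => Sm (i, l) (j, m)).det
                - (Matrix.of fun l m : Fin k => Rm (i, l) (j, m)).det)).det.re := by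
            rw [hdetDD, hfinal_blocks, haeq, Complex.mul_re]
            simp
        _ ≥ a * Sm.det.re := mul_le_mul_of_nonneg_left hchain ha0
        _ = (Ab.det * Sm.det).re := by
            rw [haeq, Complex.mul_re]
            simp
        _ = H.det.re := by rw [← hdet1]
end

section
/- Let H ∈ M_n(M_k) be a positive semidefinite block matrix with blocks H_{ij} ∈ M_k. Then (det(tr_2 H) / k^n)^k ≥ det H, where tr_2 H = [tr H_{ij}]_{i,j=1}^n ∈ M_n is the second partial trace. (Improved Fiedler–Markham inequality.) -/
open ComplexOrder

section FMaux

open Matrix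
open scoped MatrixOrder

variable {m : Type*} [Fintype m] [DecidableEq m]

variable {m : Type*} [Fintype m] [DecidableEq m]

lemma psd_det_re_eq {A : Matrix m m ℂ} (hA : A.PosSemidef) :
    A.det.re = ∏ i, hA.1.eigenvalues i := by
  rw [hA.1.det_eq_prod_eigenvalues]
  norm_cast

lemma psd_det_coe {A : Matrix m m ℂ} (hA : A.PosSemidef) : A.det = (A.det.re : ℂ) := by
  rw [psd_det_re_eq hA, hA.1.det_eq_prod_eigenvalues]
  norm_cast

lemma psd_det_re_nonneg {A : Matrix m m ℂ} (hA : A.PosSemidef) : 0 ≤ A.det.re := by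
  rw [psd_det_re_eq hA]
  exact Finset.prod_nonneg fun i _ => hA.eigenvalues_nonneg i

lemma posDef_of_psd_det_ne_zero {A : Matrix m m ℂ} (hA : A.PosSemidef) (h : A.det ≠ 0) :
    A.PosDef := by
  exact hA.posDef_iff_det_ne_zero.mpr h

lemma det_one_add_psd {C : Matrix m m ℂ} (hC : C.PosSemidef) :
    (1 + C).det = ((∏ i, (1 + hC.1.eigenvalues i) : ℝ) : ℂ) := by
  set U : Matrix m m ℂ := (hC.1.eigenvectorUnitary : Matrix m m ℂ)
  have hU : U * star U = 1 := mem_unitaryGroup_iff.mp hC.1.eigenvectorUnitary.2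
  have h1 : (1 + C) = U * (1 + diagonal (RCLike.ofReal ∘ hC.1.eigenvalues)) * star U := by
    rw [mul_add, add_mul, mul_one, hU]
    congr 1
    exact hC.1.spectral_theorem.trans (Unitary.conjStarAlgAut_apply _ _)
  rw [h1, det_mul_right_comm, hU, one_mul, ← diagonal_one, diagonal_add, det_diagonal]
  push_cast
  simp [Function.comp]

lemma one_le_det_one_add_psd {C : Matrix m m ℂ} (hC : C.PosSemidef) :
    1 ≤ ((1 + C).det).re := by
  rw [det_one_add_psd hC, Complex.ofReal_re]
  have := Finset.prod_le_prod (s := Finset.univ) (f := fun _ : m => (1:ℝ)) (g := fun i => 1 + hC.1.eigenvalues i)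
    (fun i _ => zero_le_one) (fun i _ => le_add_of_nonneg_right (hC.eigenvalues_nonneg i))
  simpa using this

lemma det_re_le_det_re_add {A B : Matrix m m ℂ} (hA : A.PosSemidef) (hB : B.PosSemidef) :
    B.det.re ≤ (A + B).det.re := by
  by_cases hdet : B.det = 0
  · rw [hdet]
    simpa using psd_det_re_nonneg (hA.add hB)
  · set S := CFC.sqrt B with hS
    have hSS : S * S = B := CFC.sqrt_mul_sqrt_self B hB.nonneg
    have hSdet : S.det ≠ 0 := fun h => hdet (by rw [← hSS, det_mul, h, zero_mul])
    haveI := invertibleOfIsUnitDet S (Ne.isUnit hSdet)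
    have hSinv : S⁻¹ᴴ = S⁻¹ := by
      rw [conjTranspose_nonsing_inv, (CFC.sqrt_nonneg B).posSemidef.1.eq]
    have hCpsd : (S⁻¹ * A * S⁻¹).PosSemidef := by
      have := hA.conjTranspose_mul_mul_same S⁻¹
      rwa [hSinv] at this
    have key : A + B = S * (1 + S⁻¹ * A * S⁻¹) * S := by
      rw [mul_add, add_mul, mul_one, hSS, ← mul_assoc, ← mul_assoc,
        mul_nonsing_inv _ (Ne.isUnit hSdet), one_mul, mul_assoc,
        nonsing_inv_mul _ (Ne.isUnit hSdet), mul_one, add_comm]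
    have hdd : (A + B).det = B.det * (1 + S⁻¹ * A * S⁻¹).det := by
      rw [key, det_mul, det_mul, mul_comm, ← mul_assoc, ← det_mul, hSS, mul_comm]
    rw [hdd, psd_det_coe hB, det_one_add_psd hCpsd, ← Complex.ofReal_mul]
    simp only [Complex.ofReal_re]
    have h1 : (1:ℝ) ≤ ∏ i, (1 + hCpsd.1.eigenvalues i) := by
      have := Finset.prod_le_prod (s := Finset.univ) (f := fun _ : m => (1:ℝ))
        (g := fun i => 1 + hCpsd.1.eigenvalues i)
        (fun i _ => zero_le_one) (fun i _ => le_add_of_nonneg_right (hCpsd.eigenvalues_nonneg i))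
      simpa using this
    have h0 : 0 ≤ B.det.re := psd_det_re_nonneg hB
    nlinarith

lemma mahler_one [Nonempty m] {μ : m → ℝ} (hμ : ∀ i, 0 < μ i) :
    1 + (∏ i, μ i) ^ ((Fintype.card m : ℝ)⁻¹) ≤
      (∏ i, (1 + μ i)) ^ ((Fintype.card m : ℝ)⁻¹) := by
  set w : ℝ := (Fintype.card m : ℝ)⁻¹ with hw
  have hcard : (0:ℝ) < Fintype.card m := by
    exact_mod_cast Fintype.card_pos
  have hwpos : 0 < w := by positivity
  have hP : ∀ i : m, (0:ℝ) < 1 + μ i := fun i => by linarith [hμ i]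
  have hPpos : (0:ℝ) < ∏ i, (1 + μ i) := Finset.prod_pos fun i _ => hP i
  have hQpos : (0:ℝ) < ∏ i, μ i := Finset.prod_pos fun i _ => hμ i
  have h1 := Real.geom_mean_le_arith_mean_weighted Finset.univ (fun _ => w)
    (fun i => 1 / (1 + μ i)) (fun i _ => le_of_lt hwpos)
    (by simp [hw, Finset.card_univ, mul_inv_cancel₀ (ne_of_gt hcard)])
    (fun i _ => le_of_lt (div_pos one_pos (hP i)))
  have h2 := Real.geom_mean_le_arith_mean_weighted Finset.univ (fun _ => w)
    (fun i => μ i / (1 + μ i)) (fun i _ => le_of_lt hwpos)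
    (by simp [hw, Finset.card_univ, mul_inv_cancel₀ (ne_of_gt hcard)])
    (fun i _ => le_of_lt (div_pos (hμ i) (hP i)))
  have hsum : (∑ i : m, w * (1 / (1 + μ i))) + (∑ i : m, w * (μ i / (1 + μ i))) = 1 := by
    rw [← Finset.sum_add_distrib]
    have : ∀ i : m, w * (1 / (1 + μ i)) + w * (μ i / (1 + μ i)) = w := fun i => by
      field_simp
      rw [div_eq_iff (ne_of_gt (hP i))]
      ring
    rw [Finset.sum_congr rfl fun i _ => this i]
    simp only [this, Finset.sum_const, Finset.card_univ, nsmul_eq_mul, hw]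
    exact mul_inv_cancel₀ (ne_of_gt hcard)
  have e1 : ∏ i : m, (1 / (1 + μ i)) ^ w = 1 / (∏ i, (1 + μ i)) ^ w := by
    rw [Real.finset_prod_rpow _ _ (fun i _ => le_of_lt (div_pos one_pos (hP i)))]
    rw [Finset.prod_div_distrib, Finset.prod_const_one]
    rw [Real.div_rpow zero_le_one (le_of_lt hPpos), Real.one_rpow]
  have e2 : ∏ i : m, (μ i / (1 + μ i)) ^ w
      = (∏ i, μ i) ^ w / (∏ i, (1 + μ i)) ^ w := by
    rw [Real.finset_prod_rpow _ _ (fun i _ => le_of_lt (div_pos (hμ i) (hP i)))]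
    rw [Finset.prod_div_distrib]
    rw [Real.div_rpow (le_of_lt hQpos) (le_of_lt hPpos)]
  have key : 1 / (∏ i, (1 + μ i)) ^ w + (∏ i, μ i) ^ w / (∏ i, (1 + μ i)) ^ w ≤ 1 := by
    rw [← e1, ← e2]
    calc _ ≤ (∑ i : m, w * (1 / (1 + μ i))) + (∑ i : m, w * (μ i / (1 + μ i))) :=
          add_le_add h1 h2
      _ = 1 := hsum
  have hPw : (0:ℝ) < (∏ i, (1 + μ i)) ^ w := Real.rpow_pos_of_pos hPpos w
  rw [← add_div, div_le_one hPw] at key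
  linarith

lemma minkowski2 [Nonempty m] {A B : Matrix m m ℂ} (hA : A.PosSemidef) (hB : B.PosSemidef) :
    A.det.re ^ ((Fintype.card m : ℝ)⁻¹) + B.det.re ^ ((Fintype.card m : ℝ)⁻¹) ≤
      (A + B).det.re ^ ((Fintype.card m : ℝ)⁻¹) := by
  set w : ℝ := (Fintype.card m : ℝ)⁻¹ with hw
  have hcard : (0:ℝ) < Fintype.card m := by exact_mod_cast Fintype.card_pos
  have hwpos : 0 < w := by positivity
  by_cases hdA : A.det = 0
  · have : A.det.re = 0 := by rw [hdA]; rfl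
    rw [this, Real.zero_rpow (ne_of_gt hwpos), zero_add]
    exact Real.rpow_le_rpow (psd_det_re_nonneg hB) (det_re_le_det_re_add hA hB) (le_of_lt hwpos)
  by_cases hdB : B.det = 0
  · have : B.det.re = 0 := by rw [hdB]; rfl
    rw [this, Real.zero_rpow (ne_of_gt hwpos), add_zero, add_comm A B]
    exact Real.rpow_le_rpow (psd_det_re_nonneg hA) (det_re_le_det_re_add hB hA) (le_of_lt hwpos)
  -- both nonsingular
  set S := CFC.sqrt A with hS
  have hSS : S * S = A := CFC.sqrt_mul_sqrt_self A hA.nonneg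
  have hSdet : S.det ≠ 0 := fun h => hdA (by rw [← hSS, det_mul, h, zero_mul])
  haveI := invertibleOfIsUnitDet S (Ne.isUnit hSdet)
  have hSinv : S⁻¹ᴴ = S⁻¹ := by
    rw [conjTranspose_nonsing_inv, (CFC.sqrt_nonneg A).posSemidef.1.eq]
  have hCpsd : (S⁻¹ * B * S⁻¹).PosSemidef := by
    have := hB.conjTranspose_mul_mul_same S⁻¹
    rwa [hSinv] at this
  set C := S⁻¹ * B * S⁻¹ with hC
  have hBC : B = S * C * S := by
    rw [hC, ← mul_assoc, ← mul_assoc, mul_nonsing_inv _ (Ne.isUnit hSdet), one_mul, mul_assoc,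
      nonsing_inv_mul _ (Ne.isUnit hSdet), mul_one]
  have hdetBC : B.det = A.det * C.det := by
    have h1 : C.det = S⁻¹.det * B.det * S⁻¹.det := by rw [hC, det_mul, det_mul]
    have h2 : A.det = S.det * S.det := by rw [← hSS, det_mul]
    have h3 : S.det * S⁻¹.det = 1 := by
      rw [← det_mul, mul_nonsing_inv _ (Ne.isUnit hSdet), det_one]
    rw [h1, h2]
    linear_combination (-(B.det) * (S.det * S⁻¹.det + 1)) * h3
  have hdC : C.det ≠ 0 := fun h => hdB (by rw [hdetBC, h, mul_zero])
  have hCpd : C.PosDef := posDef_of_psd_det_ne_zero hCpsd hdC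
  have key : A + B = S * (1 + C) * S := by
    rw [mul_add, add_mul, mul_one, hSS, hBC]
  have hdd : (A + B).det = A.det * (1 + C).det := by
    rw [key, det_mul, det_mul, ← hSS, det_mul]; ring
  -- eigenvalues of C
  have hμpos : ∀ i, 0 < hCpsd.1.eigenvalues i := fun i => hCpd.eigenvalues_pos i
  have hCre : C.det.re = ∏ i, hCpsd.1.eigenvalues i := psd_det_re_eq hCpsd
  have hab : (A + B).det.re = A.det.re * ∏ i, (1 + hCpsd.1.eigenvalues i) := by
    rw [hdd, psd_det_coe hA, det_one_add_psd hCpsd, ← Complex.ofReal_mul]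
    exact Complex.ofReal_re _
  have hBre : B.det.re = A.det.re * ∏ i, hCpsd.1.eigenvalues i := by
    rw [hdetBC, psd_det_coe hA, psd_det_coe hCpsd, ← Complex.ofReal_mul, Complex.ofReal_re, hCre]
    simp
  have ha0 : 0 ≤ A.det.re := psd_det_re_nonneg hA
  have hQ0 : (0:ℝ) ≤ ∏ i, hCpsd.1.eigenvalues i :=
    Finset.prod_nonneg fun i _ => le_of_lt (hμpos i)
  have hP0 : (0:ℝ) ≤ ∏ i, (1 + hCpsd.1.eigenvalues i) :=
    Finset.prod_nonneg fun i _ => by linarith [hμpos i]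
  rw [hab, hBre, Real.mul_rpow ha0 hP0, Real.mul_rpow ha0 hQ0]
  have := mahler_one (m := m) hμpos
  calc A.det.re ^ w + A.det.re ^ w * (∏ i, hCpsd.1.eigenvalues i) ^ w
      = A.det.re ^ w * (1 + (∏ i, hCpsd.1.eigenvalues i) ^ w) := by ring
    _ ≤ A.det.re ^ w * (∏ i, (1 + hCpsd.1.eigenvalues i)) ^ w :=
        mul_le_mul_of_nonneg_left this (Real.rpow_nonneg ha0 w)

lemma psd_sum {ι : Type*} (s : Finset ι) (F : ι → Matrix m m ℂ)
    (hF : ∀ i ∈ s, (F i).PosSemidef) : (∑ i ∈ s, F i).PosSemidef := by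
  classical
  induction s using Finset.induction_on with
  | empty => simpa using Matrix.PosSemidef.zero
  | insert _ _ hns ih =>
    rename_i a t
    rw [Finset.sum_insert hns]
    exact (hF a (Finset.mem_insert_self a t)).add
      (ih fun i hi => hF i (Finset.mem_insert_of_mem hi))

lemma minkowski_sum [Nonempty m] {ι : Type*} (s : Finset ι) (F : ι → Matrix m m ℂ)
    (hF : ∀ i ∈ s, (F i).PosSemidef) :
    ∑ i ∈ s, (F i).det.re ^ ((Fintype.card m : ℝ)⁻¹) ≤
      (∑ i ∈ s, F i).det.re ^ ((Fintype.card m : ℝ)⁻¹) := by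
  classical
  induction s using Finset.induction_on with
  | empty =>
    simp only [Finset.sum_empty]
    exact Real.rpow_nonneg (by simpa using psd_det_re_nonneg (Matrix.PosSemidef.zero
      (n := m) (R := ℂ))) _
  | insert _ _ hns ih =>
    rename_i a t
    rw [Finset.sum_insert hns, Finset.sum_insert hns]
    have h1 := ih fun i hi => hF i (Finset.mem_insert_of_mem hi)
    have h2 := minkowski2 (hF a (Finset.mem_insert_self a t))
      (psd_sum t F fun i hi => hF i (Finset.mem_insert_of_mem hi))
    calc (F a).det.re ^ ((Fintype.card m : ℝ)⁻¹) + ∑ i ∈ t, (F i).det.re ^ ((Fintype.card m : ℝ)⁻¹)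
        ≤ (F a).det.re ^ ((Fintype.card m : ℝ)⁻¹) + (∑ i ∈ t, F i).det.re ^ ((Fintype.card m : ℝ)⁻¹) := by
          linarith
      _ ≤ _ := h2

lemma fischer2 {p q : Type*} [Fintype p] [DecidableEq p] [Fintype q] [DecidableEq q]
    (M : Matrix (p ⊕ q) (p ⊕ q) ℂ) (hM : M.PosSemidef) :
    M.det.re ≤ (M.submatrix Sum.inl Sum.inl).det.re * (M.submatrix Sum.inr Sum.inr).det.re := by
  set A := M.submatrix Sum.inl Sum.inl with hA
  set D := M.submatrix Sum.inr Sum.inr with hD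
  set B := M.submatrix Sum.inl Sum.inr with hB
  have hApsd : A.PosSemidef := hM.submatrix Sum.inl
  have hDpsd : D.PosSemidef := hM.submatrix Sum.inr
  have hMeq : M = fromBlocks A B Bᴴ D := by
    ext i j
    have hherm : ∀ x y, star (M y x) = M x y := fun x y => congrFun (congrFun hM.1 x) y
    cases i with
    | inl i => cases j with
      | inl j => rfl
      | inr j => rfl
    | inr i => cases j with
      | inl j => exact (hherm _ _).symm ▸ rfl
      | inr j => rfl
  by_cases hdA : A.det = 0
  · have hMdet : M.det = 0 := by
      obtain ⟨v, hv, hAv⟩ := Matrix.exists_mulVec_eq_zero_iff.mpr hdA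
      set y : p ⊕ q → ℂ := Sum.elim v 0 with hy
      have hy0 : y ≠ 0 := by
        intro h
        apply hv
        funext i
        exact congrFun h (Sum.inl i)
      have hdot : star y ⬝ᵥ M *ᵥ y = star v ⬝ᵥ A *ᵥ v := by
        simp [dotProduct, mulVec, Fintype.sum_sum_type, hy, hA, submatrix]
      have hzero : star y ⬝ᵥ M *ᵥ y = 0 := by
        rw [hdot, hAv, dotProduct_zero]
      rw [hM.dotProduct_mulVec_zero_iff] at hzero
      exact Matrix.exists_mulVec_eq_zero_iff.mp ⟨y, hy0, hzero⟩
    rw [hMdet]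
    simp only [Complex.zero_re]
    exact mul_nonneg (psd_det_re_nonneg hApsd) (psd_det_re_nonneg hDpsd)
  · have hApd : A.PosDef := posDef_of_psd_det_ne_zero hApsd hdA
    haveI := hApd.isUnit.invertible
    have hSchur : (D - Bᴴ * A⁻¹ * B).PosSemidef :=
      (Matrix.PosDef.fromBlocks₁₁ B D hApd).mp (hMeq ▸ hM)
    have hX : (Bᴴ * A⁻¹ * B).PosSemidef :=
      (hApd.inv.posSemidef).conjTranspose_mul_mul_same B
    have hDsum : Bᴴ * A⁻¹ * B + (D - Bᴴ * A⁻¹ * B) = D := add_sub_cancel _ _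
    have hmono : (D - Bᴴ * A⁻¹ * B).det.re ≤ D.det.re := by
      have := det_re_le_det_re_add hX hSchur
      rwa [hDsum] at this
    have hdet : M.det = A.det * (D - Bᴴ * A⁻¹ * B).det := by
      rw [hMeq, Matrix.det_fromBlocks₁₁, invOf_eq_nonsing_inv]
    have hre : M.det.re = A.det.re * (D - Bᴴ * A⁻¹ * B).det.re := by
      rw [hdet, psd_det_coe hApsd, psd_det_coe hSchur, ← Complex.ofReal_mul]
      simp
    rw [hre]
    exact mul_le_mul_of_nonneg_left hmono (psd_det_re_nonneg hApsd)

def sumFinEquiv (m : Type*) (K : ℕ) : ((m × Fin K) ⊕ m) ≃ m × Fin (K + 1) where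
  toFun := Sum.elim (fun il => (il.1, il.2.castSucc)) (fun i => (i, Fin.last K))
  invFun := fun x => if h : x.2 = Fin.last K then Sum.inr x.1
    else Sum.inl (x.1, x.2.castPred h)
  left_inv := by
    rintro (⟨i, l⟩ | i)
    · simp [Fin.castPred_castSucc, (Fin.castSucc_lt_last l).ne]
    · simp
  right_inv := by
    rintro ⟨i, l⟩
    by_cases h : l = Fin.last K
    · simp [h]
    · simp [h, Fin.castSucc_castPred]

lemma fischer (K : ℕ) (H : Matrix (m × Fin K) (m × Fin K) ℂ) (hH : H.PosSemidef) :
    H.det.re ≤ ∏ l : Fin K,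
      (H.submatrix (fun i => (i, l)) (fun i => (i, l))).det.re := by
  induction K with
  | zero =>
    haveI : IsEmpty (m × Fin 0) := by infer_instance
    simp [Matrix.det_isEmpty]
  | succ K ih =>
    set e := sumFinEquiv m K with he
    set M := H.submatrix e e with hM
    have hMpsd : M.PosSemidef := hH.submatrix e
    have hdet : M.det = H.det := Matrix.det_submatrix_equiv_self e H
    have h2 := fischer2 M hMpsd
    have hM11 : M.submatrix Sum.inl Sum.inl =
        (fun i j => H (i.1, i.2.castSucc) (j.1, j.2.castSucc) :
          Matrix (m × Fin K) (m × Fin K) ℂ) := rfl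
    have h11psd : (M.submatrix Sum.inl Sum.inl).PosSemidef := hMpsd.submatrix Sum.inl
    have hih := ih (M.submatrix Sum.inl Sum.inl) h11psd
    have heq1 : ∀ l : Fin K,
        (M.submatrix Sum.inl Sum.inl).submatrix (fun i : m => (i, l)) (fun i => (i, l)) =
          H.submatrix (fun i : m => (i, l.castSucc)) (fun i => (i, l.castSucc)) := fun l => rfl
    have heq2 : M.submatrix Sum.inr Sum.inr =
        H.submatrix (fun i : m => (i, Fin.last K)) (fun i => (i, Fin.last K)) := rfl
    simp only [heq1] at hih
    rw [← hdet, Fin.prod_univ_castSucc]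
    calc M.det.re ≤ (M.submatrix Sum.inl Sum.inl).det.re * (M.submatrix Sum.inr Sum.inr).det.re :=
          h2
      _ ≤ (∏ l : Fin K,
            (H.submatrix (fun i : m => (i, l.castSucc)) (fun i => (i, l.castSucc))).det.re) *
            (H.submatrix (fun i : m => (i, Fin.last K)) (fun i => (i, Fin.last K))).det.re := by
          rw [heq2]
          exact mul_le_mul_of_nonneg_right hih (psd_det_re_nonneg (hH.submatrix _))

end FMaux

/-- **Improved Fiedler–Markham inequality.** If `H ∈ M_n(M_k)` is positive
semidefinite, then `(det(tr₂ H) / k^n)^k ≥ det H`, where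
`tr₂ H = [tr H_{ij}]_{i,j=1}^n` is the second partial trace. -/
theorem fiedler_markham_improved {n k : ℕ} (hn : 0 < n) (hk : 0 < k)
    (H : Matrix (Fin n × Fin k) (Fin n × Fin k) ℂ) (hH : H.PosSemidef) :
    ((Matrix.det (Matrix.of fun i j : Fin n =>
        Matrix.trace (Matrix.of fun l m : Fin k => H (i, l) (j, m)))).re
      / (k : ℝ) ^ n) ^ k ≥ H.det.re := by
  haveI : Nonempty (Fin n) := ⟨⟨0, hn⟩⟩
  set F : Fin k → Matrix (Fin n) (Fin n) ℂ :=
    fun l => H.submatrix (fun i => (i, l)) (fun i => (i, l)) with hF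
  have hFpsd : ∀ l, (F l).PosSemidef := fun l => hH.submatrix _
  set T : Matrix (Fin n) (Fin n) ℂ := Matrix.of fun i j : Fin n =>
    Matrix.trace (Matrix.of fun l m : Fin k => H (i, l) (j, m)) with hT
  have hTsum : T = ∑ l, F l := by
    ext i j
    simp [hT, hF, Matrix.trace, Matrix.sum_apply, Matrix.diag, Matrix.submatrix]
  have hTpsd : T.PosSemidef := by
    rw [hTsum]; exact psd_sum _ _ fun l _ => hFpsd l
  set d : Fin k → ℝ := fun l => (F l).det.re with hd
  have hd0 : ∀ l, 0 ≤ d l := fun l => psd_det_re_nonneg (hFpsd l)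
  set b : ℝ := T.det.re with hb
  have hb0 : 0 ≤ b := psd_det_re_nonneg hTpsd
  set h : ℝ := H.det.re with hh
  have hh0 : 0 ≤ h := psd_det_re_nonneg hH
  set P : ℝ := ∏ l, d l with hP
  have hP0 : 0 ≤ P := Finset.prod_nonneg fun l _ => hd0 l
  -- Minkowski
  have hmink : ∑ l, d l ^ ((n : ℝ)⁻¹) ≤ b ^ ((n : ℝ)⁻¹) := by
    have := minkowski_sum (m := Fin n) Finset.univ F (fun l _ => hFpsd l)
    rw [← hTsum] at this
    simpa [Fintype.card_fin] using this
  -- AM-GM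
  have hkpos : (0:ℝ) < k := by exact_mod_cast hk
  have hnpos : (0:ℝ) < n := by exact_mod_cast hn
  have hamgm : P ^ ((n:ℝ)⁻¹ * (k:ℝ)⁻¹) ≤ (k:ℝ)⁻¹ * ∑ l, d l ^ ((n:ℝ)⁻¹) := by
    have := Real.geom_mean_le_arith_mean_weighted Finset.univ (fun _ => (k:ℝ)⁻¹)
      (fun l => d l ^ ((n:ℝ)⁻¹)) (fun l _ => by positivity)
      (by simp [Finset.card_univ, mul_inv_cancel₀ (ne_of_gt hkpos)])
      (fun l _ => Real.rpow_nonneg (hd0 l) _)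
    calc P ^ ((n:ℝ)⁻¹ * (k:ℝ)⁻¹)
        = ∏ l, (d l ^ ((n:ℝ)⁻¹)) ^ ((k:ℝ)⁻¹) := by
          rw [Real.finset_prod_rpow _ _ (fun l _ => Real.rpow_nonneg (hd0 l) _),
            Real.finset_prod_rpow _ _ (fun l _ => hd0 l), ← Real.rpow_mul hP0]
      _ ≤ ∑ l, (k:ℝ)⁻¹ * d l ^ ((n:ℝ)⁻¹) := this
      _ = (k:ℝ)⁻¹ * ∑ l, d l ^ ((n:ℝ)⁻¹) := by rw [Finset.mul_sum]
  -- Fischer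
  have hfischer : h ≤ P := fischer k H hH
  have hPh : h ^ ((n:ℝ)⁻¹ * (k:ℝ)⁻¹) ≤ P ^ ((n:ℝ)⁻¹ * (k:ℝ)⁻¹) :=
    Real.rpow_le_rpow hh0 hfischer (by positivity)
  have hstep : (k:ℝ) * h ^ ((n:ℝ)⁻¹ * (k:ℝ)⁻¹) ≤ b ^ ((n:ℝ)⁻¹) := by
    have h1 : h ^ ((n:ℝ)⁻¹ * (k:ℝ)⁻¹) ≤ (k:ℝ)⁻¹ * b ^ ((n:ℝ)⁻¹) := by
      calc h ^ ((n:ℝ)⁻¹ * (k:ℝ)⁻¹) ≤ P ^ ((n:ℝ)⁻¹ * (k:ℝ)⁻¹) := hPh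
        _ ≤ (k:ℝ)⁻¹ * ∑ l, d l ^ ((n:ℝ)⁻¹) := hamgm
        _ ≤ (k:ℝ)⁻¹ * b ^ ((n:ℝ)⁻¹) := by
            exact mul_le_mul_of_nonneg_left hmink (by positivity)
    calc (k:ℝ) * h ^ ((n:ℝ)⁻¹ * (k:ℝ)⁻¹) ≤ (k:ℝ) * ((k:ℝ)⁻¹ * b ^ ((n:ℝ)⁻¹)) :=
          mul_le_mul_of_nonneg_left h1 (le_of_lt hkpos)
      _ = b ^ ((n:ℝ)⁻¹) := by field_simp
  have hbn : (k:ℝ)^n * h ^ ((k:ℝ)⁻¹) ≤ b := by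
    have hle := pow_le_pow_left₀ (by positivity) hstep n
    rw [mul_pow, Real.rpow_inv_natCast_pow hb0 (Nat.pos_iff_ne_zero.mp hn)] at hle
    have hexp : h ^ ((n:ℝ)⁻¹ * (k:ℝ)⁻¹) = (h ^ ((k:ℝ)⁻¹)) ^ ((n:ℝ)⁻¹) := by
      rw [mul_comm, Real.rpow_mul hh0]
    rw [hexp, Real.rpow_inv_natCast_pow (Real.rpow_nonneg hh0 _)
      (Nat.pos_iff_ne_zero.mp hn)] at hle
    exact hle
  have hdiv : h ^ ((k:ℝ)⁻¹) ≤ b / (k:ℝ)^n := by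
    rw [le_div_iff₀ (by positivity)]
    calc h ^ ((k:ℝ)⁻¹) * (k:ℝ)^n = (k:ℝ)^n * h ^ ((k:ℝ)⁻¹) := by ring
      _ ≤ b := hbn
  have hfin := pow_le_pow_left₀ (Real.rpow_nonneg hh0 _) hdiv k
  rw [Real.rpow_inv_natCast_pow hh0 (Nat.pos_iff_ne_zero.mp hk)] at hfin
  exact hfin
end

section
/- Let H ∈ M_n(M_k) be a positive semidefinite block matrix. Then (tr(det_1 H) / k)^k ≥ det H, where det_1 H ∈ M_k is the k×k matrix whose (l,m) entry is det G_{lm}, with G_{lm} ∈ M_n the matrix whose (i,j) entry is H((i,l),(j,m)). (Choi's inequality.) -/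
open ComplexOrder

section ChoiAux
open Matrix

namespace Matrix.PosSemidef
variable {m : Type*} [Fintype m] [DecidableEq m]
open scoped MatrixOrder in
noncomputable def sqrt {X : Matrix m m ℂ} (_hX : X.PosSemidef) : Matrix m m ℂ := CFC.sqrt X
open scoped MatrixOrder in
lemma sqrt_mul_self {X : Matrix m m ℂ} (hX : X.PosSemidef) : hX.sqrt * hX.sqrt = X :=
  CFC.sqrt_mul_sqrt_self X hX.nonneg
open scoped MatrixOrder in
lemma posSemidef_sqrt {X : Matrix m m ℂ} (hX : X.PosSemidef) : hX.sqrt.PosSemidef :=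
  Matrix.nonneg_iff_posSemidef.mp (CFC.sqrt_nonneg X)
end Matrix.PosSemidef


variable {m : Type*} [Fintype m] [DecidableEq m]

lemma psd_det_nonneg {X : Matrix m m ℂ} (hX : X.PosSemidef) : 0 ≤ X.det := by
  rw [hX.1.det_eq_prod_eigenvalues]
  apply Finset.prod_nonneg
  intro i _
  exact RCLike.ofReal_nonneg.mpr (hX.eigenvalues_nonneg i)

lemma psd_posDef_of_det_ne_zero {X : Matrix m m ℂ} (hX : X.PosSemidef) (h : X.det ≠ 0) :
    X.PosDef := by
  refine Matrix.PosDef.of_dotProduct_mulVec_pos hX.1 (fun x hx => ?_)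
  have hS : hX.sqrt * hX.sqrt = X := hX.sqrt_mul_self
  have hdetS : hX.sqrt.det ≠ 0 := fun h0 => h (by rw [← hS, Matrix.det_mul, h0, zero_mul])
  have hSx : hX.sqrt *ᵥ x ≠ 0 := by
    intro h0
    apply hx
    have h1 : hX.sqrt⁻¹ *ᵥ (hX.sqrt *ᵥ x) = x := by
      rw [Matrix.mulVec_mulVec, Matrix.nonsing_inv_mul _ (Ne.isUnit hdetS), Matrix.one_mulVec]
    rw [← h1, h0, Matrix.mulVec_zero]
  have key : star (hX.sqrt *ᵥ x) ⬝ᵥ (hX.sqrt *ᵥ x) = star x ⬝ᵥ X *ᵥ x := by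
    rw [Matrix.star_mulVec, ← Matrix.dotProduct_mulVec, Matrix.mulVec_mulVec,
      hX.posSemidef_sqrt.1.eq, hS]
  rw [← key]
  exact Matrix.dotProduct_star_self_pos_iff.mpr hSx

lemma one_le_det_one_add {Q : Matrix m m ℂ} (hQ : Q.PosSemidef) : 1 ≤ (1 + Q).det := by
  have hH := hQ.1
  have hUU : (hH.eigenvectorUnitary : Matrix m m ℂ) * (star hH.eigenvectorUnitary : Matrix m m ℂ)
      = 1 := (Matrix.mem_unitaryGroup_iff).mp hH.eigenvectorUnitary.2
  have hfact : 1 + Q = (hH.eigenvectorUnitary : Matrix m m ℂ)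
      * (1 + Matrix.diagonal (RCLike.ofReal ∘ hH.eigenvalues))
      * (star hH.eigenvectorUnitary : Matrix m m ℂ) := by
    rw [mul_add, add_mul, mul_one, hUU]
    congr 1
    exact hH.spectral_theorem
  rw [hfact, Matrix.det_mul, Matrix.det_mul]
  have hdetU : (hH.eigenvectorUnitary : Matrix m m ℂ).det
      * (star hH.eigenvectorUnitary : Matrix m m ℂ).det = 1 := by
    rw [← Matrix.det_mul, hUU, Matrix.det_one]
  have hdiag : ((1 + Matrix.diagonal (RCLike.ofReal ∘ hH.eigenvalues) : Matrix m m ℂ)).det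
      = ((∏ i, (1 + hH.eigenvalues i) : ℝ) : ℂ) := by
    rw [← Matrix.diagonal_one, Matrix.diagonal_add, Matrix.det_diagonal]
    push_cast
    rfl
  calc (1:ℂ) = ((1:ℝ):ℂ) := by norm_num
    _ ≤ ((∏ i, (1 + hH.eigenvalues i) : ℝ) : ℂ) := by
        rw [Complex.real_le_real]
        calc (1:ℝ) = ∏ _i : m, 1 := by simp
          _ ≤ ∏ i, (1 + hH.eigenvalues i) := Finset.prod_le_prod (by simp)
              (fun i _ => by linarith [hQ.eigenvalues_nonneg i])
    _ = _ := by rw [hdiag, mul_right_comm, hdetU, one_mul]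

lemma det_mono_psd {X P : Matrix m m ℂ} (hX : X.PosSemidef) (hP : P.PosSemidef) :
    X.det ≤ (X + P).det := by
  by_cases hd : X.det = 0
  · rw [hd]; exact psd_det_nonneg (hX.add hP)
  · set S := hX.sqrt with hSdef
    have hS : S * S = X := hX.sqrt_mul_self
    have hdetS : S.det ≠ 0 := fun h0 => hd (by rw [← hS, Matrix.det_mul, h0, zero_mul])
    have hU : IsUnit S.det := Ne.isUnit hdetS
    have hSinvH : S⁻¹.IsHermitian := hX.posSemidef_sqrt.1.inv
    have hQ : (S⁻¹ * P * S⁻¹).PosSemidef := by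
      have := hP.mul_mul_conjTranspose_same S⁻¹
      rwa [hSinvH.eq] at this
    have hfact : X + P = S * (1 + S⁻¹ * P * S⁻¹) * S := by
      rw [mul_add, add_mul, mul_one, hS]
      congr 1
      rw [show S * (S⁻¹ * P * S⁻¹) * S = (S * S⁻¹) * P * (S⁻¹ * S) by simp only [Matrix.mul_assoc],
        Matrix.mul_nonsing_inv _ hU, Matrix.nonsing_inv_mul _ hU, one_mul, mul_one]
    calc X.det = X.det * 1 := (mul_one _).symm
      _ ≤ X.det * (1 + S⁻¹ * P * S⁻¹).det :=
          mul_le_mul_of_nonneg_left (one_le_det_one_add hQ) (psd_det_nonneg hX)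
      _ = (X + P).det := by
          rw [hfact, Matrix.det_mul, Matrix.det_mul, ← hS, Matrix.det_mul]; ring

lemma fischer_two {α β : Type*} [Fintype α] [Fintype β] [DecidableEq α] [DecidableEq β]
    {A : Matrix α α ℂ} {B : Matrix α β ℂ} {D : Matrix β β ℂ}
    (h : (Matrix.fromBlocks A B Bᴴ D).PosSemidef) :
    (Matrix.fromBlocks A B Bᴴ D).det ≤ A.det * D.det := by
  have hsubA : (Matrix.fromBlocks A B Bᴴ D).submatrix Sum.inl Sum.inl = A := by ext i j; rfl
  have hsubD : (Matrix.fromBlocks A B Bᴴ D).submatrix Sum.inr Sum.inr = D := by ext i j; rfl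
  have hAps : A.PosSemidef := hsubA ▸ h.submatrix Sum.inl
  have hDps : D.PosSemidef := hsubD ▸ h.submatrix Sum.inr
  by_cases hdet : (Matrix.fromBlocks A B Bᴴ D).det = 0
  · rw [hdet]; exact mul_nonneg (psd_det_nonneg hAps) (psd_det_nonneg hDps)
  · have hPD := psd_posDef_of_det_ne_zero h hdet
    have hApd : A.PosDef := by
      refine Matrix.PosDef.of_dotProduct_mulVec_pos hAps.1 (fun x hx => ?_)
      have hy : (Sum.elim x (0 : β → ℂ)) ≠ 0 := by
        intro h0; apply hx; funext i; exact congrFun h0 (Sum.inl i)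
      have hq := hPD.dotProduct_mulVec_pos hy
      have heq : star (Sum.elim x (0 : β → ℂ)) ⬝ᵥ
          (Matrix.fromBlocks A B Bᴴ D *ᵥ Sum.elim x (0 : β → ℂ)) = star x ⬝ᵥ A *ᵥ x := by
        have hstar : star (Sum.elim x (0 : β → ℂ)) = Sum.elim (star x) 0 := by
          funext i; cases i <;> simp [Pi.star_apply]
        rw [hstar, Matrix.fromBlocks_mulVec]
        simp [dotProduct, Fintype.sum_sum_type]
      rwa [heq] at hq
    have : Invertible A := A.invertibleOfIsUnitDet hApd.det_pos.ne'.isUnit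
    have hSchur : (D - Bᴴ * A⁻¹ * B).PosSemidef := (Matrix.PosDef.fromBlocks₁₁ B D hApd).mp h
    have hconj : (Bᴴ * A⁻¹ * B).PosSemidef := hApd.inv.posSemidef.conjTranspose_mul_mul_same B
    have hle : (D - Bᴴ * A⁻¹ * B).det ≤ D.det := by
      have := det_mono_psd hSchur hconj
      rwa [sub_add_cancel] at this
    rw [Matrix.det_fromBlocks₁₁, invOf_eq_nonsing_inv]
    exact mul_le_mul_of_nonneg_left hle (psd_det_nonneg hAps)

lemma fischer_blocks (k : ℕ) {β : Type*} [Fintype β] [DecidableEq β]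
    (M : Matrix (Fin k × β) (Fin k × β) ℂ) (hM : M.PosSemidef) :
    M.det ≤ ∏ l : Fin k,
      (M.submatrix (fun b => (l, b)) (fun b => (l, b))).det := by
  induction k with
  | zero => simp [Matrix.det_isEmpty]
  | succ k ih =>
    let e : (β ⊕ (Fin k × β)) ≃ (Fin (k + 1) × β) :=
      { toFun := Sum.elim (fun b => ((0 : Fin (k + 1)), b)) (fun p => (p.1.succ, p.2))
        invFun := fun p => Fin.cases (Sum.inl p.2) (fun i => Sum.inr (i, p.2)) p.1
        left_inv := by rintro (b | ⟨i, b⟩) <;> simp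
        right_inv := by
          rintro ⟨i, b⟩
          refine Fin.cases ?_ (fun j => ?_) i <;> simp }
    set A : Matrix β β ℂ := M.submatrix (fun b => ((0 : Fin (k + 1)), b)) (fun b => (0, b)) with hA
    set B : Matrix β (Fin k × β) ℂ :=
      Matrix.of (fun b p => M (0, b) (p.1.succ, p.2)) with hB
    set D : Matrix (Fin k × β) (Fin k × β) ℂ :=
      M.submatrix (fun p : Fin k × β => (p.1.succ, p.2)) (fun p => (p.1.succ, p.2)) with hD
    have hblocks : M.submatrix ⇑e ⇑e = Matrix.fromBlocks A B Bᴴ D := by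
      ext i j
      cases i with
      | inl i =>
        cases j with
        | inl j => rfl
        | inr j => rfl
      | inr i =>
        cases j with
        | inl j =>
          show M _ _ = Bᴴ i j
          rw [Matrix.conjTranspose_apply, hB]
          exact (hM.1.apply _ _).symm
        | inr j => rfl
    have hsub : (M.submatrix ⇑e ⇑e).PosSemidef := hM.submatrix ⇑e
    have hDps : D.PosSemidef := hM.submatrix _
    have hdetM : M.det = (M.submatrix ⇑e ⇑e).det := (Matrix.det_submatrix_equiv_self e M).symm
    have h2 : (M.submatrix ⇑e ⇑e).det ≤ A.det * D.det := by
      rw [hblocks]; rw [hblocks] at hsub; exact fischer_two hsub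
    have hDle := ih D hDps
    have hAps : A.PosSemidef := hM.submatrix _
    calc M.det ≤ A.det * D.det := hdetM ▸ h2
      _ ≤ A.det * ∏ l : Fin k,
            (D.submatrix (fun b => (l, b)) (fun b => (l, b))).det :=
          mul_le_mul_of_nonneg_left hDle (psd_det_nonneg hAps)
      _ = ∏ l : Fin (k + 1),
            (M.submatrix (fun b => (l, b)) (fun b => (l, b))).det := by
          rw [Fin.prod_univ_succ]
          rfl

end ChoiAux

/-- **Choi's inequality.** If `H ∈ M_n(M_k)` is positive semidefinite, then
`(tr(det₁ H) / k)^k ≥ det H`, where `det₁ H ∈ M_k` has `(l,m)` entry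
`det G_{lm}` with `G_{lm} ∈ M_n` given by `(G_{lm})_{ij} = H ((i,l),(j,m))`. -/
theorem choi_trace_det1_ineq {n k : ℕ} (hn : 0 < n) (hk : 0 < k)
    (H : Matrix (Fin n × Fin k) (Fin n × Fin k) ℂ) (hH : H.PosSemidef) :
    ((Matrix.trace (Matrix.of fun l m : Fin k =>
        (Matrix.of fun i j : Fin n => H (i, l) (j, m)).det)).re
      / (k : ℝ)) ^ k ≥ H.det.re := by
  have hk0 : (k : ℝ) ≠ 0 := Nat.cast_ne_zero.mpr hk.ne'
  set G : Fin k → Matrix (Fin n) (Fin n) ℂ :=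
    fun l => Matrix.of (fun i j : Fin n => H (i, l) (j, l)) with hG
  set x : Fin k → ℝ := fun l => ((G l).det).re with hx
  have hGps : ∀ l, (G l).PosSemidef := fun l => hH.submatrix (fun i => (i, l))
  have hGnonneg : ∀ l, 0 ≤ (G l).det := fun l => psd_det_nonneg (hGps l)
  have hxnn : ∀ l, 0 ≤ x l := fun l => (Complex.nonneg_iff.mp (hGnonneg l)).1
  have hGreal : ∀ l, (G l).det = ((x l : ℝ) : ℂ) := fun l =>
    Complex.ext (by simp [hx]) (by simp [hx, ((Complex.nonneg_iff.mp (hGnonneg l)).2).symm])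
  -- Fischer's inequality
  have hM : (H.submatrix (Prod.swap : Fin k × Fin n → Fin n × Fin k)
      (Prod.swap : Fin k × Fin n → Fin n × Fin k)).PosSemidef := hH.submatrix _
  have hfischer := fischer_blocks k (β := Fin n) _ hM
  have hdetswap : (H.submatrix Prod.swap Prod.swap).det = H.det :=
    Matrix.det_submatrix_equiv_self (Equiv.prodComm (Fin k) (Fin n)) H
  have hblockeq : ∀ l : Fin k,
      ((H.submatrix (Prod.swap : Fin k × Fin n → Fin n × Fin k) Prod.swap).submatrix
        (fun b : Fin n => (l, b)) (fun b => (l, b))) = G l := fun l => rfl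
  have hFisch : H.det ≤ ((∏ l, x l : ℝ) : ℂ) := by
    rw [← hdetswap]
    refine hfischer.trans ?_
    rw [show (∏ l, ((H.submatrix (Prod.swap : Fin k × Fin n → Fin n × Fin k)
        Prod.swap).submatrix (fun b : Fin n => (l, b)) (fun b => (l, b))).det)
        = ∏ l, (G l).det from by simp_rw [hblockeq]]
    rw [show (∏ l, (G l).det) = ((∏ l, x l : ℝ) : ℂ) from by push_cast [hGreal]; rfl]
  have hre : H.det.re ≤ ∏ l, x l := by
    have := (Complex.le_def.mp hFisch).1
    rwa [Complex.ofReal_re] at this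
  -- trace computation
  have htrace : (Matrix.trace (Matrix.of fun l m : Fin k =>
      (Matrix.of fun i j : Fin n => H (i, l) (j, m)).det)).re = ∑ l, x l := by
    simp [Matrix.trace, Matrix.diag, Complex.re_sum, hx, hG]
  rw [htrace]
  -- AM-GM
  have hamgm : ∏ l, x l ≤ ((∑ l, x l) / k) ^ k := by
    have h1 := Real.geom_mean_le_arith_mean_weighted Finset.univ
      (fun _ => 1 / (k : ℝ)) x (fun i _ => by positivity)
      (by simp [Finset.sum_const, hk0]) (fun i _ => hxnn i)
    have h2 : ∑ l, (1 / (k : ℝ)) * x l = (∑ l, x l) / k := by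
      rw [← Finset.mul_sum]; ring
    rw [h2] at h1
    have h3 : (∏ l, x l ^ ((1 : ℝ) / k)) ^ k = ∏ l, x l := by
      rw [← Finset.prod_pow]
      refine Finset.prod_congr rfl (fun i _ => ?_)
      rw [← Real.rpow_natCast (x i ^ ((1:ℝ)/k)) k, ← Real.rpow_mul (hxnn i)]
      rw [one_div, inv_mul_cancel₀ hk0, Real.rpow_one]
    calc ∏ l, x l = (∏ l, x l ^ ((1 : ℝ) / k)) ^ k := h3.symm
      _ ≤ ((∑ l, x l) / k) ^ k := by
          apply pow_le_pow_left₀ (Finset.prod_nonneg (fun i _ => Real.rpow_nonneg (hxnn i) _)) h1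
  exact le_trans hre hamgm
end

section
/- Let H ∈ M_n(M_k) be positive semidefinite, and for each l ∈ {1,…,k} let G_{ll} ∈ M_n be the matrix with (i,j) entry H((i,l),(j,l)). Then det H ≤ ∏_{l=1}^k det G_{ll}. -/
open ComplexOrder

open Matrix in
/-- The determinant of a positive semidefinite complex matrix is a nonnegative real. -/
lemma psd_det_real {m : Type*} [Fintype m] [DecidableEq m]
    {A : Matrix m m ℂ} (hA : A.PosSemidef) :
    ∃ r : ℝ, 0 ≤ r ∧ A.det = (r : ℂ) := by
  refine ⟨∏ i, hA.isHermitian.eigenvalues i,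
    Finset.prod_nonneg fun i _ => hA.eigenvalues_nonneg i, ?_⟩
  rw [hA.isHermitian.det_eq_prod_eigenvalues]
  push_cast
  rfl

open Matrix in
/-- `det (1 + Q) ≥ 1` for `Q` positive semidefinite. -/
lemma det_one_add_psd_s7 {m : Type*} [Fintype m] [DecidableEq m]
    {Q : Matrix m m ℂ} (hQ : Q.PosSemidef) :
    ∃ d : ℝ, 1 ≤ d ∧ (1 + Q).det = (d : ℂ) := by
  have hM : (1 + Q).PosSemidef := Matrix.PosSemidef.add Matrix.PosSemidef.one hQ
  have key : ∀ i, 1 ≤ hM.isHermitian.eigenvalues i := by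
    intro i
    rw [hM.isHermitian.eigenvalues_eq]
    set v : m → ℂ := ⇑(hM.isHermitian.eigenvectorBasis i) with hvdef
    have h1 : star v ⬝ᵥ (1 + Q) *ᵥ v = star v ⬝ᵥ v + star v ⬝ᵥ Q *ᵥ v := by
      rw [add_mulVec, one_mulVec, dotProduct_add]
    rw [h1]
    have h2 : star v ⬝ᵥ v = 1 := by
      have hv := hM.isHermitian.eigenvectorBasis.orthonormal.1 i
      have := EuclideanSpace.inner_eq_star_dotProduct (𝕜 := ℂ)
        (hM.isHermitian.eigenvectorBasis i) (hM.isHermitian.eigenvectorBasis i)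
      rw [inner_self_eq_norm_sq_to_K, hv] at this
      rw [dotProduct_comm]; simpa using this.symm
    rw [map_add, h2]
    have h3 := hQ.re_dotProduct_nonneg v
    simp only [RCLike.re_to_complex] at h3 ⊢
    simp [h3]
  refine ⟨∏ i, hM.isHermitian.eigenvalues i, ?_, by
    rw [hM.isHermitian.det_eq_prod_eigenvalues]; push_cast; rfl⟩
  calc (1:ℝ) = ∏ _i : m, (1:ℝ) := by simp
    _ ≤ ∏ i, hM.isHermitian.eigenvalues i :=
      Finset.prod_le_prod (fun i _ => zero_le_one) (fun i _ => key i)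

open scoped MatrixOrder in
open Matrix in
/-- Monotonicity of the determinant: `det S ≤ det (S + P)` for `S`, `P` PSD. -/
lemma det_mono_psd_s7 {m : Type*} [Fintype m] [DecidableEq m]
    {S P : Matrix m m ℂ} (hS : S.PosSemidef) (hP : P.PosSemidef) :
    S.det.re ≤ (S + P).det.re := by
  obtain ⟨s, hs0, hsdet⟩ := psd_det_real hS
  obtain ⟨r, hr0, hrdet⟩ := psd_det_real (hS.add hP)
  by_cases hdet : S.det = 0
  · rw [hdet, hrdet]; simpa using hr0
  · set T := CFC.sqrt S with hTdef
    have hTpsd : T.PosSemidef := (CFC.sqrt_nonneg S).posSemidef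
    have hTT : T * T = S := CFC.sqrt_mul_sqrt_self S hS.nonneg
    have hTdet : IsUnit T.det := by
      have : T.det * T.det = S.det := by rw [← det_mul, hTT]
      exact isUnit_iff_ne_zero.mpr (fun h => hdet (by rw [← this, h, zero_mul]))
    have hTinv : T * T⁻¹ = 1 := mul_nonsing_inv T hTdet
    have hTinv' : T⁻¹ * T = 1 := nonsing_inv_mul T hTdet
    set Q := T⁻¹ * P * T⁻¹ with hQdef
    have hQpsd : Q.PosSemidef := by
      have h1 : (T⁻¹)ᴴ = T⁻¹ := (hTpsd.isHermitian.inv).eq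
      have := hP.conjTranspose_mul_mul_same (B := T⁻¹)
      rwa [h1] at this
    have hfact : T * (1 + Q) * T = S + P := by
      rw [mul_add, mul_one, add_mul, hTT]
      congr 1
      rw [hQdef, ← mul_assoc, ← mul_assoc, hTinv, one_mul, mul_assoc, hTinv', mul_one]
    obtain ⟨t, ht0, htdet⟩ := psd_det_real hTpsd
    obtain ⟨d, hd1, hddet⟩ := det_one_add_psd_s7 hQpsd
    have hSP : (S + P).det = ((t * d * t : ℝ) : ℂ) := by
      rw [← hfact, det_mul, det_mul, htdet, hddet]; push_cast; ring
    have hSdet : S.det = ((t * t : ℝ) : ℂ) := by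
      rw [← hTT, det_mul, htdet]; push_cast; ring
    rw [hSP, hSdet, Complex.ofReal_re, Complex.ofReal_re]
    nlinarith

open Matrix in
/-- Fischer's inequality for a 2×2 block decomposition. -/
lemma fischer_two_block {m n : Type*} [Fintype m] [Fintype n] [DecidableEq m] [DecidableEq n]
    (M : Matrix (m ⊕ n) (m ⊕ n) ℂ) (hM : M.PosSemidef) :
    M.det.re ≤ (M.submatrix Sum.inl Sum.inl).det.re * (M.submatrix Sum.inr Sum.inr).det.re := by
  set A := M.submatrix Sum.inl Sum.inl with hAdef
  set D := M.submatrix Sum.inr Sum.inr with hDdef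
  set B := M.submatrix Sum.inl Sum.inr with hBdef
  have hApsd : A.PosSemidef := hM.submatrix Sum.inl
  have hDpsd : D.PosSemidef := hM.submatrix Sum.inr
  obtain ⟨a, ha0, hadet⟩ := psd_det_real hApsd
  obtain ⟨dd, hd0, hddet⟩ := psd_det_real hDpsd
  have hMblocks : M = fromBlocks A B Bᴴ D := by
    ext i j
    cases i with
    | inl i => cases j with
      | inl j => rfl
      | inr j => rfl
    | inr i => cases j with
      | inl j =>
        have := congrFun (congrFun hM.isHermitian.eq (Sum.inr i)) (Sum.inl j)
        simpa [fromBlocks, conjTranspose_apply] using this.symm ▸ rfl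
      | inr j => rfl
  by_cases hApd : A.PosDef
  · haveI : Invertible A := hApd.isUnit.invertible
    have hS : (D - Bᴴ * A⁻¹ * B).PosSemidef := by
      rw [← PosDef.fromBlocks₁₁ B D hApd, ← hMblocks]
      exact hM
    have hdetM : M.det = A.det * (D - Bᴴ * A⁻¹ * B).det := by
      rw [hMblocks, det_fromBlocks₁₁, invOf_eq_nonsing_inv]
    have hBAB : (Bᴴ * A⁻¹ * B).PosSemidef :=
      hApd.inv.posSemidef.conjTranspose_mul_mul_same B
    have hmono : (D - Bᴴ * A⁻¹ * B).det.re ≤ D.det.re := by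
      have := det_mono_psd_s7 hS hBAB
      rwa [sub_add_cancel] at this
    obtain ⟨ss, hs0, hsdet⟩ := psd_det_real hS
    have h1 : M.det.re = a * ss := by
      rw [hdetM, hadet, hsdet, ← Complex.ofReal_mul]; simp
    have h4 : A.det.re = a := by rw [hadet]; simp
    have h3 : D.det.re = dd := by rw [hddet]; simp
    have h2 : (D - Bᴴ * A⁻¹ * B).det.re = ss := by rw [hsdet]; simp
    rw [h1, h4, h3]
    rw [h2, h3] at hmono
    nlinarith
  · -- A is singular, so det M = 0
    have hMdet : M.det = 0 := by
      obtain ⟨x, hx, hq⟩ : ∃ x : m → ℂ, x ≠ 0 ∧ star x ⬝ᵥ A *ᵥ x = 0 := by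
        by_contra hc
        push_neg at hc
        refine hApd (posDef_iff_dotProduct_mulVec.mpr ⟨hApsd.isHermitian, fun x hx => ?_⟩)
        exact lt_of_le_of_ne ((posSemidef_iff_dotProduct_mulVec.mp hApsd).2 x) (Ne.symm (hc x hx))
      have hAx : A *ᵥ x = 0 := (hApsd.dotProduct_mulVec_zero_iff x).mp hq
      set y : m ⊕ n → ℂ := Sum.elim x 0 with hydef
      have hy : y ≠ 0 := by
        intro h
        apply hx
        funext i
        exact congrFun h (Sum.inl i)
      have hqy : star y ⬝ᵥ M *ᵥ y = star x ⬝ᵥ A *ᵥ x := by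
        rw [hMblocks, hydef]
        simp [Function.star_sumElim, fromBlocks_mulVec, dotProduct,
          Fintype.sum_sum_type, mulVec, dotProduct]
      have hMy : M *ᵥ y = 0 := (hM.dotProduct_mulVec_zero_iff y).mp (by rw [hqy, hq])
      exact (Matrix.exists_mulVec_eq_zero_iff.mp ⟨y, hy, hMy⟩)
    rw [hMdet, hadet, hddet]
    simp only [Complex.zero_re, Complex.ofReal_re]
    positivity

/-- If `H ∈ M_n(M_k)` is positive semidefinite and `G_{ll} ∈ M_n` has `(i,j)`
entry `H((i,l),(j,l))`, then `det H ≤ ∏_{l=1}^k det G_{ll}` (all determinants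
are nonnegative reals, compared via their real parts). -/
theorem det_le_prod_det_diag_blocks {n k : ℕ}
    (H : Matrix (Fin n × Fin k) (Fin n × Fin k) ℂ) (hH : H.PosSemidef) :
    H.det.re ≤ ∏ l : Fin k, (Matrix.of fun i j : Fin n => H (i, l) (j, l)).det.re := by
  open Matrix in
  induction k with
  | zero =>
    simp [Matrix.det_isEmpty]
  | succ k ih =>
    let e : Fin n × Fin (k + 1) ≃ (Fin n × Fin k) ⊕ Fin n :=
      (Equiv.prodCongr (Equiv.refl (Fin n))
        (finSuccEquivLast.trans
          (Equiv.optionEquivSumPUnit (Fin k) : Option (Fin k) ≃ Fin k ⊕ Unit))).trans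
        ((Equiv.prodSumDistrib (Fin n) (Fin k) Unit).trans
          (Equiv.sumCongr (Equiv.refl _) (Equiv.prodPUnit (Fin n))))
    have he1 : ∀ (i : Fin n) (l : Fin k), e.symm (Sum.inl (i, l)) = (i, l.castSucc) := by
      intro i l
      apply e.injective
      simp [e, Equiv.prodSumDistrib]
    have he2 : ∀ (i : Fin n), e.symm (Sum.inr i) = (i, Fin.last k) := by
      intro i
      apply e.injective
      simp [e, Equiv.prodSumDistrib]
    set M := H.submatrix e.symm e.symm with hMdef
    have hMpsd : M.PosSemidef := hH.submatrix e.symm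
    have hdetM : M.det = H.det := det_submatrix_equiv_self e.symm H
    have hfisch := fischer_two_block M hMpsd
    have hblock1 : M.submatrix Sum.inl Sum.inl =
        H.submatrix (fun p : Fin n × Fin k => (p.1, p.2.castSucc))
          (fun p : Fin n × Fin k => (p.1, p.2.castSucc)) := by
      ext ⟨i, l⟩ ⟨j, m⟩
      simp [hMdef, he1]
    have hblock2 : M.submatrix Sum.inr Sum.inr =
        Matrix.of fun i j : Fin n => H (i, Fin.last k) (j, Fin.last k) := by
      ext i j
      simp [hMdef, he2]
    set H₁ := H.submatrix (fun p : Fin n × Fin k => (p.1, p.2.castSucc))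
          (fun p : Fin n × Fin k => (p.1, p.2.castSucc)) with hH₁def
    have hH₁psd : H₁.PosSemidef := hH.submatrix _
    have hIH := ih H₁ hH₁psd
    have hG : ∀ l : Fin k, (Matrix.of fun i j : Fin n => H₁ (i, l) (j, l)) =
        (Matrix.of fun i j : Fin n => H (i, l.castSucc) (j, l.castSucc)) := fun l => rfl
    obtain ⟨g, hg0, hgdet⟩ := psd_det_real (hH.submatrix (fun i : Fin n => (i, Fin.last k)))
    have hglast : (Matrix.of fun i j : Fin n => H (i, Fin.last k) (j, Fin.last k)).det.re = g := by
      rw [show (Matrix.of fun i j : Fin n => H (i, Fin.last k) (j, Fin.last k)) =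
        H.submatrix (fun i : Fin n => (i, Fin.last k)) (fun i : Fin n => (i, Fin.last k)) from rfl,
        hgdet]
      simp
    rw [Fin.prod_univ_castSucc]
    calc H.det.re = M.det.re := by rw [hdetM]
      _ ≤ (M.submatrix Sum.inl Sum.inl).det.re * (M.submatrix Sum.inr Sum.inr).det.re := hfisch
      _ = H₁.det.re * g := by rw [hblock1, hblock2, hglast]
      _ ≤ (∏ l : Fin k, (Matrix.of fun i j : Fin n => H (i, l.castSucc) (j, l.castSucc)).det.re)
            * g := by
          apply mul_le_mul_of_nonneg_right _ hg0
          simpa [hG] using hIH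
      _ = _ := by rw [hglast]
end

section
/- Let H ∈ M_n(M_k) be a positive semidefinite block matrix with blocks H_{ij} ∈ M_k. Then (tr(det_2 H) / n)^n ≥ det H, where det_2 H = [det H_{ij}]_{i,j=1}^n ∈ M_n is the second partial determinant. -/
open ComplexOrder

namespace ChoiAux

open Matrix Finset

variable {m : Type*} [Fintype m] [DecidableEq m]

lemma det_eq_re {M : Matrix m m ℂ} (hM : M.IsHermitian) :
    M.det = (M.det.re : ℂ) := by
  rw [hM.det_eq_prod_eigenvalues]
  norm_cast

lemma det_re_nonneg {M : Matrix m m ℂ} (hM : M.PosSemidef) : 0 ≤ M.det.re := by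
  rw [hM.1.det_eq_prod_eigenvalues]
  norm_cast
  exact Finset.prod_nonneg fun i _ => hM.eigenvalues_nonneg i

lemma re_nonneg_of_nonneg {z : ℂ} (hz : 0 ≤ z) : 0 ≤ z.re := by
  rw [Complex.le_def] at hz; simpa using hz.1

lemma eigenvalues_le_one {M : Matrix m m ℂ} (hM : M.PosSemidef)
    (h1 : (1 - M).PosSemidef) (i : m) : hM.1.eigenvalues i ≤ 1 := by
  set v : m → ℂ := ⇑(hM.1.eigenvectorBasis i) with hv
  have hvv : star v ⬝ᵥ v = 1 := by
    have := hM.1.eigenvectorBasis.orthonormal.1 i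
    rw [hv, dotProduct_comm, ← EuclideanSpace.inner_eq_star_dotProduct]
    simpa [inner_self_eq_norm_sq_to_K, this] using congrArg (fun r : ℝ => ((r : ℂ))^2) this
  have hq : 0 ≤ star v ⬝ᵥ (1 - M) *ᵥ v := h1.dotProduct_mulVec_nonneg v
  have hsplit : star v ⬝ᵥ (1 - M) *ᵥ v = 1 - star v ⬝ᵥ M *ᵥ v := by
    rw [sub_mulVec, dotProduct_sub, one_mulVec, hvv]
  have hre : (star v ⬝ᵥ M *ᵥ v).re ≤ 1 := by
    have := re_nonneg_of_nonneg hq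
    rw [hsplit] at this
    simpa using this
  have := hM.1.eigenvalues_eq i
  rw [this]
  simpa using hre

open scoped MatrixOrder in
lemma det_re_mono {X Q : Matrix m m ℂ} (hX : X.PosSemidef) (hQ : Q.PosSemidef) :
    X.det.re ≤ (X + Q).det.re := by
  have hXQ : (X + Q).PosSemidef := hX.add hQ
  by_cases h : IsUnit (X + Q).det
  · set S := CFC.sqrt (X + Q) with hSdef
    have hS : S.PosSemidef := Matrix.nonneg_iff_posSemidef.mp (CFC.sqrt_nonneg _)
    have hSS : S * S = X + Q := CFC.sqrt_mul_sqrt_self _ hXQ.nonneg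
    have hSunit : IsUnit S.det := by
      have hm : S.det * S.det = (X + Q).det := by rw [← Matrix.det_mul, hSS]
      exact isUnit_of_mul_isUnit_left (hm ▸ h)
    haveI : Invertible S := S.invertibleOfIsUnitDet hSunit
    have hSinv : S⁻¹.IsHermitian := hS.1.inv
    have hMps : (S⁻¹ * X * S⁻¹).PosSemidef := by
      have := hX.mul_mul_conjTranspose_same S⁻¹
      rwa [hSinv.eq] at this
    have hone : S⁻¹ * (X + Q) * S⁻¹ = 1 := by
      have h1 : S⁻¹ * (X + Q) * S⁻¹ = (S⁻¹ * S) * (S * S⁻¹) := by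
        rw [← hSS]; noncomm_ring
      rw [h1, Matrix.nonsing_inv_mul S hSunit, Matrix.mul_nonsing_inv S hSunit, one_mul]
    have hQps : (1 - S⁻¹ * X * S⁻¹).PosSemidef := by
      have hsub : 1 - S⁻¹ * X * S⁻¹ = S⁻¹ * Q * S⁻¹ := by
        rw [← hone, Matrix.mul_add, Matrix.add_mul]
        abel
      rw [hsub]
      have := hQ.mul_mul_conjTranspose_same S⁻¹
      rwa [hSinv.eq] at this
    -- det of middle matrix is ≤ 1
    have hdetM : (S⁻¹ * X * S⁻¹).det.re ≤ 1 := by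
      rw [hMps.1.det_eq_prod_eigenvalues]
      norm_cast
      exact Finset.prod_le_one (fun i _ => hMps.eigenvalues_nonneg i)
        (fun i _ => eigenvalues_le_one hMps hQps i)
    have hXfac : S * (S⁻¹ * X * S⁻¹) * S = X := by
      have h1 : S * (S⁻¹ * X * S⁻¹) * S = (S * S⁻¹) * X * (S⁻¹ * S) := by noncomm_ring
      rw [h1, Matrix.mul_nonsing_inv S hSunit, Matrix.nonsing_inv_mul S hSunit, one_mul, mul_one]
    have hdet : X.det = (S⁻¹ * X * S⁻¹).det * (X + Q).det := by
      conv_lhs => rw [← hXfac]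
      rw [← hSS]
      simp only [Matrix.det_mul]
      ring
    have h1 := det_eq_re hMps.1
    have h2 := det_eq_re hXQ.1
    have : X.det.re = (S⁻¹ * X * S⁻¹).det.re * (X + Q).det.re := by
      rw [hdet, h1, h2]
      simp
    rw [this]
    exact mul_le_of_le_one_left (det_re_nonneg hXQ) hdetM
  · rw [isUnit_iff_ne_zero, not_not] at h
    obtain ⟨v, hv, hveq⟩ := (Matrix.exists_mulVec_eq_zero_iff).mpr h
    have h0 : star v ⬝ᵥ X *ᵥ v + star v ⬝ᵥ Q *ᵥ v = 0 := by
      rw [← dotProduct_add, ← Matrix.add_mulVec, hveq, dotProduct_zero]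
    have hx0 : star v ⬝ᵥ X *ᵥ v = 0 :=
      ((add_eq_zero_iff_of_nonneg (hX.dotProduct_mulVec_nonneg v) (hQ.dotProduct_mulVec_nonneg v)).mp h0).1
    have hXv : X *ᵥ v = 0 := (hX.dotProduct_mulVec_zero_iff v).mp hx0
    have hXdet : X.det = 0 := (Matrix.exists_mulVec_eq_zero_iff).mp ⟨v, hv, hXv⟩
    rw [hXdet]
    simpa using det_re_nonneg hXQ

lemma posDef_of_isUnit_det {A : Matrix m m ℂ} (hA : A.PosSemidef)
    (h : IsUnit A.det) : A.PosDef := by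
  refine .of_dotProduct_mulVec_pos hA.1 fun x hx => ?_
  refine lt_of_le_of_ne (hA.dotProduct_mulVec_nonneg x) (fun h0 => ?_)
  have hAx : A *ᵥ x = 0 := (hA.dotProduct_mulVec_zero_iff x).mp h0.symm
  have : A.det = 0 := (Matrix.exists_mulVec_eq_zero_iff).mp ⟨x, hx, hAx⟩
  rw [isUnit_iff_ne_zero] at h
  exact h this

lemma fischer_fromBlocks {a b : Type*} [Fintype a] [DecidableEq a] [Fintype b] [DecidableEq b]
    {A : Matrix a a ℂ} {B : Matrix a b ℂ} {D : Matrix b b ℂ}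
    (h : (Matrix.fromBlocks A B Bᴴ D).PosSemidef) :
    (Matrix.fromBlocks A B Bᴴ D).det.re ≤ A.det.re * D.det.re := by
  have hA : A.PosSemidef := by
    have := h.submatrix (Sum.inl : a → a ⊕ b)
    have he : (Matrix.fromBlocks A B Bᴴ D).submatrix (Sum.inl : a → a ⊕ b) Sum.inl = A := by
      ext i j; rfl
    rwa [he] at this
  have hD : D.PosSemidef := by
    have := h.submatrix (Sum.inr : b → a ⊕ b)
    have he : (Matrix.fromBlocks A B Bᴴ D).submatrix (Sum.inr : b → a ⊕ b) Sum.inr = D := by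
      ext i j; rfl
    rwa [he] at this
  by_cases hu : IsUnit A.det
  · have hApd : A.PosDef := posDef_of_isUnit_det hA hu
    haveI : Invertible A := A.invertibleOfIsUnitDet hu
    have hSchur : (D - Bᴴ * A⁻¹ * B).PosSemidef :=
      (Matrix.PosDef.fromBlocks₁₁ B D hApd).mp h
    have hQ : (Bᴴ * A⁻¹ * B).PosSemidef := hA.inv.conjTranspose_mul_mul_same B
    have hDsum : (D - Bᴴ * A⁻¹ * B) + Bᴴ * A⁻¹ * B = D := by abel
    have hmono : (D - Bᴴ * A⁻¹ * B).det.re ≤ D.det.re := by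
      have := det_re_mono hSchur hQ
      rwa [hDsum] at this
    have hdet : (Matrix.fromBlocks A B Bᴴ D).det = A.det * (D - Bᴴ * A⁻¹ * B).det := by
      rw [Matrix.det_fromBlocks₁₁, Matrix.invOf_eq_nonsing_inv]
    have hre : (Matrix.fromBlocks A B Bᴴ D).det.re = A.det.re * (D - Bᴴ * A⁻¹ * B).det.re := by
      rw [hdet, det_eq_re hA.1, det_eq_re hSchur.1]
      simp
    rw [hre]
    exact mul_le_mul_of_nonneg_left hmono (det_re_nonneg hA)
  · rw [isUnit_iff_ne_zero, not_not] at hu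
    obtain ⟨v, hv, hveq⟩ := (Matrix.exists_mulVec_eq_zero_iff).mpr hu
    set u : a ⊕ b → ℂ := Sum.elim v 0 with hu'
    have hustar : star u = Sum.elim (star v) 0 := by
      funext i; cases i <;> simp [hu']
    have hq : star u ⬝ᵥ (Matrix.fromBlocks A B Bᴴ D) *ᵥ u = 0 := by
      rw [hu', Matrix.fromBlocks_mulVec, hustar, sumElim_dotProduct_sumElim]
      simp [hveq]
    have hHu : (Matrix.fromBlocks A B Bᴴ D) *ᵥ u = 0 :=
      (h.dotProduct_mulVec_zero_iff u).mp hq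
    have hune : u ≠ 0 := by
      intro h0
      apply hv
      funext i
      exact congrFun h0 (Sum.inl i)
    have : (Matrix.fromBlocks A B Bᴴ D).det = 0 :=
      (Matrix.exists_mulVec_eq_zero_iff).mp ⟨u, hune, hHu⟩
    rw [this, hu]
    simp

lemma fischer_pair {a b : Type*} [Fintype a] [DecidableEq a] [Fintype b] [DecidableEq b]
    (M : Matrix (a ⊕ b) (a ⊕ b) ℂ) (hM : M.PosSemidef) :
    M.det.re ≤ M.toBlocks₁₁.det.re * M.toBlocks₂₂.det.re := by
  have h21 : M.toBlocks₂₁ = M.toBlocks₁₂ᴴ := by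
    ext i j
    have := congrFun (congrFun hM.1.eq (Sum.inr i)) (Sum.inl j)
    simpa [Matrix.toBlocks₂₁, Matrix.toBlocks₁₂, Matrix.conjTranspose_apply] using this.symm
  have hfb : M = Matrix.fromBlocks M.toBlocks₁₁ M.toBlocks₁₂ M.toBlocks₁₂ᴴ M.toBlocks₂₂ := by
    rw [← h21, Matrix.fromBlocks_toBlocks]
  calc M.det.re = (Matrix.fromBlocks M.toBlocks₁₁ M.toBlocks₁₂ M.toBlocks₁₂ᴴ M.toBlocks₂₂).det.re := by
        rw [← hfb]
    _ ≤ _ := fischer_fromBlocks (hfb ▸ hM)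

/-- The splitting map. -/
def splitFun (n k : ℕ) : (Fin k ⊕ (Fin n × Fin k)) → Fin (n+1) × Fin k :=
  Sum.elim (fun l => ((0 : Fin (n+1)), l)) (fun p => (p.1.succ, p.2))

lemma splitFun_bij (n k : ℕ) : Function.Bijective (splitFun n k) := by
  rw [Fintype.bijective_iff_injective_and_card]
  constructor
  · intro x y hxy
    cases x with
    | inl l => cases y with
      | inl l' => simp [splitFun, Prod.ext_iff] at hxy; simp [hxy]
      | inr p => exact absurd (congrArg Prod.fst hxy) (by simp [splitFun]; exact (Fin.succ_ne_zero p.1).symm)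
    | inr p => cases y with
      | inl l' => exact absurd (congrArg Prod.fst hxy) (by simp [splitFun])
      | inr p' =>
        simp only [splitFun, Sum.elim_inr, Prod.ext_iff] at hxy
        obtain ⟨h1, h2⟩ := hxy
        have := Fin.succ_injective _ h1
        cases p; cases p'
        simp_all
  · simp [Fintype.card_sum, Fintype.card_prod]
    ring

noncomputable def splitEquiv (n k : ℕ) : (Fin k ⊕ (Fin n × Fin k)) ≃ (Fin (n+1) × Fin k) :=
  Equiv.ofBijective _ (splitFun_bij n k)

lemma splitEquiv_apply (n k : ℕ) (x) : splitEquiv n k x = splitFun n k x := rfl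

lemma fischer_blocks {k : ℕ} :
    ∀ (n : ℕ) (H : Matrix (Fin n × Fin k) (Fin n × Fin k) ℂ), H.PosSemidef →
      H.det.re ≤ ∏ i : Fin n, (Matrix.of fun l m : Fin k => H (i, l) (i, m)).det.re := by
  intro n
  induction n with
  | zero =>
    intro H _
    simp [Matrix.det_isEmpty]
  | succ n ih =>
    intro H hH
    set e := splitEquiv n k with he
    set M := H.submatrix e e with hM
    have hMps : M.PosSemidef := hH.submatrix ⇑e
    have hdet : M.det = H.det := Matrix.det_submatrix_equiv_self e H
    have h1 : M.toBlocks₁₁ = Matrix.of fun l m : Fin k => H ((0 : Fin (n+1)), l) (0, m) := by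
      ext i j; rfl
    have h2ps : M.toBlocks₂₂.PosSemidef := by
      have heq : M.toBlocks₂₂ = H.submatrix (fun p : Fin n × Fin k => (p.1.succ, p.2))
          (fun p : Fin n × Fin k => (p.1.succ, p.2)) := by
        ext i j; rfl
      rw [heq]
      exact hH.submatrix _
    have hih := ih M.toBlocks₂₂ h2ps
    have hblocks : ∀ j : Fin n, (Matrix.of fun l m : Fin k => M.toBlocks₂₂ (j, l) (j, m)) =
        (Matrix.of fun l m : Fin k => H (j.succ, l) (j.succ, m)) := by
      intro j; ext l m'; rfl
    have hfp := fischer_pair M hMps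
    rw [hdet] at hfp
    have h11ps : M.toBlocks₁₁.PosSemidef := by
      have heq : M.toBlocks₁₁ = H.submatrix (fun l : Fin k => ((0 : Fin (n+1)), l))
          (fun l : Fin k => ((0 : Fin (n+1)), l)) := by ext i j; rfl
      rw [heq]; exact hH.submatrix _
    calc H.det.re ≤ M.toBlocks₁₁.det.re * M.toBlocks₂₂.det.re := hfp
      _ ≤ M.toBlocks₁₁.det.re *
          ∏ j : Fin n, (Matrix.of fun l m : Fin k => M.toBlocks₂₂ (j, l) (j, m)).det.re :=
        mul_le_mul_of_nonneg_left hih (det_re_nonneg h11ps)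
      _ = ∏ i : Fin (n+1), (Matrix.of fun l m : Fin k => H (i, l) (i, m)).det.re := by
        rw [Fin.prod_univ_succ, h1]
        congr 1

lemma amgm {n : ℕ} (hn : 0 < n) (x : Fin n → ℝ) (hx : ∀ i, 0 ≤ x i) :
    ∏ i, x i ≤ ((∑ i, x i) / n) ^ n := by
  have hw : ∑ _i : Fin n, (n : ℝ)⁻¹ = 1 := by
    rw [Finset.sum_const, Finset.card_univ, Fintype.card_fin, nsmul_eq_mul]
    field_simp
  have h := Real.geom_mean_le_arith_mean_weighted Finset.univ (fun _ => (n : ℝ)⁻¹) x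
    (fun i _ => by positivity) hw (fun i _ => hx i)
  have hG : 0 ≤ ∏ i, x i ^ ((n : ℝ)⁻¹) :=
    Finset.prod_nonneg fun i _ => Real.rpow_nonneg (hx i) _
  have hpow := pow_le_pow_left₀ hG h n
  have hL : (∏ i, x i ^ ((n : ℝ)⁻¹)) ^ n = ∏ i, x i := by
    rw [← Finset.prod_pow]
    refine Finset.prod_congr rfl fun i _ => ?_
    rw [← Real.rpow_natCast (x i ^ ((n : ℝ)⁻¹)) n, ← Real.rpow_mul (hx i),
      inv_mul_cancel₀ (by exact_mod_cast hn.ne'), Real.rpow_one]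
  have hR : (∑ i : Fin n, (n : ℝ)⁻¹ * x i) = (∑ i, x i) / n := by
    rw [← Finset.mul_sum]
    ring
  rw [hL, hR] at hpow
  exact hpow

end ChoiAux

/-- If `H ∈ M_n(M_k)` is positive semidefinite, then
`(tr(det₂ H) / n)^n ≥ det H`, where `det₂ H = [det H_{ij}]_{i,j=1}^n ∈ M_n`
is the second partial determinant. -/
theorem choi_trace_det2_ineq {n k : ℕ} (hn : 0 < n) (hk : 0 < k)
    (H : Matrix (Fin n × Fin k) (Fin n × Fin k) ℂ) (hH : H.PosSemidef) :
    ((Matrix.trace (Matrix.of fun i j : Fin n =>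
        (Matrix.of fun l m : Fin k => H (i, l) (j, m)).det)).re
      / (n : ℝ)) ^ n ≥ H.det.re := by
  have hblock : ∀ i : Fin n, (Matrix.of fun l m : Fin k => H (i, l) (i, m)).PosSemidef := by
    intro i
    have heq : (Matrix.of fun l m : Fin k => H (i, l) (i, m)) =
        H.submatrix (fun l : Fin k => (i, l)) (fun l : Fin k => (i, l)) := by
      ext l m'; rfl
    rw [heq]; exact hH.submatrix _
  have htr : (Matrix.trace (Matrix.of fun i j : Fin n =>
      (Matrix.of fun l m : Fin k => H (i, l) (j, m)).det)).re =
      ∑ i : Fin n, (Matrix.of fun l m : Fin k => H (i, l) (i, m)).det.re := by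
    rw [Matrix.trace]
    rw [Complex.re_sum]
    rfl
  rw [ge_iff_le, htr]
  calc H.det.re ≤ ∏ i : Fin n, (Matrix.of fun l m : Fin k => H (i, l) (i, m)).det.re :=
        ChoiAux.fischer_blocks n H hH
    _ ≤ _ := ChoiAux.amgm hn _ fun i => ChoiAux.det_re_nonneg (hblock i)
end

section
/- Let A and B be positive semidefinite complex matrices of the same size and let r be a positive integer. Then ⊗^r (A+B) ≥ ⊗^r A + ⊗^r B in the Loewner order, where ⊗^r X denotes the r-fold Kronecker tensor power of X. (Superadditivity of the tensor power.) -/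
open Kronecker ComplexOrder

/-- `tpIdx I r` is the index type of the `(r+1)`-fold Kronecker tensor power of
a matrix indexed by `I`. -/
def tpIdx (I : Type) : ℕ → Type
  | 0 => I
  | r + 1 => tpIdx I r × I

instance tpIdx.fintype (I : Type) [Fintype I] : ∀ r : ℕ, Fintype (tpIdx I r)
  | 0 => ‹Fintype I›
  | r + 1 => letI := tpIdx.fintype I r; inferInstanceAs (Fintype (tpIdx I r × I))

/-- `tensorPow X r` is the `(r+1)`-fold Kronecker tensor power `⊗^{r+1} X`:
`tensorPow X 0 = ⊗¹X = X` and `tensorPow X (m+1) = ⊗^{m+2}X = (⊗^{m+1}X) ⊗ X`.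
Thus as `r` ranges over `ℕ`, `tensorPow X r` ranges over all tensor powers
`⊗^r X` with `r` a positive integer. -/
noncomputable def tensorPow {I : Type} (X : Matrix I I ℂ) :
    (r : ℕ) → Matrix (tpIdx I r) (tpIdx I r) ℂ
  | 0 => X
  | r + 1 => (tensorPow X r) ⊗ₖ X

open Matrix

lemma conjTranspose_kron {m n : Type} (A : Matrix m m ℂ) (B : Matrix n n ℂ) :
    (A ⊗ₖ B)ᴴ = Aᴴ ⊗ₖ Bᴴ := by
  ext i j
  simp [Matrix.kroneckerMap_apply, Matrix.conjTranspose_apply, _root_.map_mul]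

lemma psd_kron {m n : Type} [Fintype m] [Fintype n]
    {A : Matrix m m ℂ} {B : Matrix n n ℂ}
    (hA : A.PosSemidef) (hB : B.PosSemidef) : (A ⊗ₖ B).PosSemidef := by
  obtain ⟨C, rfl⟩ : ∃ C : Matrix m m ℂ, A = Cᴴ * C := by
    classical
    open MatrixOrder in exact CStarAlgebra.nonneg_iff_eq_star_mul_self.mp hA.nonneg
  obtain ⟨D, rfl⟩ : ∃ D : Matrix n n ℂ, B = Dᴴ * D := by
    classical
    open MatrixOrder in exact CStarAlgebra.nonneg_iff_eq_star_mul_self.mp hB.nonneg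
  rw [Matrix.mul_kronecker_mul, ← conjTranspose_kron]
  exact Matrix.posSemidef_conjTranspose_mul_self _

lemma psd_tensorPow {I : Type} [Fintype I] {X : Matrix I I ℂ} (hX : X.PosSemidef) :
    ∀ r : ℕ, (tensorPow X r).PosSemidef
  | 0 => hX
  | r + 1 => psd_kron (psd_tensorPow hX r) hX

/-- **Superadditivity of the tensor power.** For positive semidefinite `A, B`
of the same size and every positive integer `r`,
`⊗^r (A+B) ≥ ⊗^r A + ⊗^r B` in the Loewner order. -/
theorem tensorPow_superadditive {N : ℕ} (A B : Matrix (Fin N) (Fin N) ℂ)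
    (hA : A.PosSemidef) (hB : B.PosSemidef) (r : ℕ) :
    (tensorPow (A + B) r - (tensorPow A r + tensorPow B r)).PosSemidef := by
  induction r with
  | zero =>
    show (A + B - (A + B)).PosSemidef
    simpa using (Matrix.PosSemidef.zero : (0 : Matrix (Fin N) (Fin N) ℂ).PosSemidef)
  | succ r ih =>
    have key : tensorPow (A + B) (r + 1) - (tensorPow A (r + 1) + tensorPow B (r + 1)) =
        (tensorPow (A + B) r - (tensorPow A r + tensorPow B r)) ⊗ₖ (A + B)
        + (tensorPow A r ⊗ₖ B + tensorPow B r ⊗ₖ A) := by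
      ext ⟨i, k⟩ ⟨j, l⟩
      change (tensorPow (A + B) r ⊗ₖ (A + B) - (tensorPow A r ⊗ₖ A + tensorPow B r ⊗ₖ B) :
        Matrix (tpIdx (Fin N) r × Fin N) (tpIdx (Fin N) r × Fin N) ℂ) (i, k) (j, l) = _
      simp [tensorPow, Matrix.kroneckerMap_apply, Matrix.sub_apply, Matrix.add_apply]
      ring
    rw [key]
    exact ((psd_kron ih (hA.add hB)).add
      ((psd_kron (psd_tensorPow hA r) hB).add (psd_kron (psd_tensorPow hB r) hA)))
end

section
/- Let A = [A_{ij}]_{i,j=1}^n ∈ M_n(M_k) be a complex block matrix and r a positive integer. Then the block matrix [⊗^r A_{ij}]_{i,j=1}^n (an n×n block matrix with blocks of size k^r) is a principal submatrix of ⊗^r A: there is an injective map e from its index set into the index set of ⊗^r A such that [⊗^r A_{ij}]_{i,j} equals the submatrix of ⊗^r A obtained by restricting rows and columns along e. -/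
open Kronecker ComplexOrder

def emb (n k : ℕ) : (r : ℕ) → Fin n × tpIdx (Fin k) r → tpIdx (Fin n × Fin k) r
  | 0 => fun p => (p.1, p.2)
  | r + 1 => fun p => (emb n k r (p.1, p.2.1), (p.1, p.2.2))

lemma emb_inj (n k : ℕ) : ∀ r, Function.Injective (emb n k r)
  | 0 => fun p q h => Prod.ext (congrArg Prod.fst h) (congrArg Prod.snd h)
  | r + 1 => fun p q h => by
    have h1 : emb n k r (p.1, p.2.1) = emb n k r (q.1, q.2.1) := congrArg Prod.fst h
    have h2 : ((p.1, p.2.2) : Fin n × Fin k) = (q.1, q.2.2) := congrArg Prod.snd h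
    have h3 := emb_inj n k r h1
    have h4 : (p.2 : tpIdx (Fin k) r × Fin k) = q.2 :=
      Prod.ext (Prod.ext_iff.mp h3).2 (Prod.ext_iff.mp h2).2
    exact Prod.ext (Prod.ext_iff.mp h3).1 h4

lemma emb_spec {n k : ℕ} (A : Matrix (Fin n × Fin k) (Fin n × Fin k) ℂ) :
    ∀ (r : ℕ) (i j : Fin n) (t s : tpIdx (Fin k) r),
      tensorPow (Matrix.of fun l m : Fin k => A (i, l) (j, m)) r t s =
        tensorPow A r (emb n k r (i, t)) (emb n k r (j, s))
  | 0, i, j, t, s => rfl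
  | r + 1, i, j, (t, l), (s, m) => by
    show tensorPow (Matrix.of fun l m : Fin k => A (i, l) (j, m)) r t s
          * A (i, l) (j, m) = _
    rw [emb_spec A r i j t s]
    rfl

/-- For a block matrix `A = [A_{ij}] ∈ M_n(M_k)` and a positive integer power,
the block matrix `[⊗^r A_{ij}]_{i,j=1}^n` is a principal submatrix of `⊗^r A`:
there is an injection `e` of index sets along which `[⊗^r A_{ij}]` is the
restriction of `⊗^r A`. -/
theorem blocks_tensorPow_principal_submatrix {n k : ℕ}
    (A : Matrix (Fin n × Fin k) (Fin n × Fin k) ℂ) (r : ℕ) :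
    ∃ e : Fin n × tpIdx (Fin k) r → tpIdx (Fin n × Fin k) r,
      Function.Injective e ∧
      (Matrix.of fun p q : Fin n × tpIdx (Fin k) r =>
          tensorPow (Matrix.of fun l m : Fin k => A (p.1, l) (q.1, m)) r p.2 q.2) =
        (tensorPow A r).submatrix e e := by
  refine ⟨emb n k r, emb_inj n k r, ?_⟩
  ext ⟨i, t⟩ ⟨j, s⟩
  exact emb_spec A r i j t s
end

section
/- Let A, B, C be positive semidefinite complex matrices of the same size and r a positive integer. Then ⊗^r(A+B+C) + ⊗^r A + ⊗^r B + ⊗^r C ≥ ⊗^r(A+B) + ⊗^r(A+C) + ⊗^r(B+C) in the Loewner order. -/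
open Kronecker ComplexOrder

open Matrix in
lemma aux_conjTranspose_kronecker {l m n p : Type} (A : Matrix l m ℂ) (B : Matrix n p ℂ) :
    (A ⊗ₖ B)ᴴ = Aᴴ ⊗ₖ Bᴴ := by
  ext ⟨i, j⟩ ⟨k, l⟩
  simp [Matrix.conjTranspose_apply, Matrix.kroneckerMap_apply, mul_comm]

lemma aux_posSemidef_kronecker {m n : Type} [Fintype m] [Fintype n]
    [DecidableEq m] [DecidableEq n]
    {A : Matrix m m ℂ} {B : Matrix n n ℂ}
    (hA : A.PosSemidef) (hB : B.PosSemidef) : (A ⊗ₖ B).PosSemidef := by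
  exact hA.kronecker hB

instance aux_decEq (I : Type) [DecidableEq I] : ∀ r : ℕ, DecidableEq (tpIdx I r)
  | 0 => ‹DecidableEq I›
  | r + 1 => letI := aux_decEq I r; inferInstanceAs (DecidableEq (tpIdx I r × I))

lemma aux_tensorPow_posSemidef {N : ℕ} {X : Matrix (Fin N) (Fin N) ℂ}
    (hX : X.PosSemidef) : ∀ r : ℕ, (tensorPow X r).PosSemidef
  | 0 => hX
  | r + 1 => aux_posSemidef_kronecker (aux_tensorPow_posSemidef hX r) hX


lemma aux_neg_kronecker {l m n p : Type} (A : Matrix l m ℂ) (B : Matrix n p ℂ) :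
    (-A) ⊗ₖ B = -(A ⊗ₖ B) := by
  ext ⟨i, j⟩ ⟨k, l⟩
  simp [Matrix.kroneckerMap_apply]

lemma aux_two_term {N : ℕ} {X Y : Matrix (Fin N) (Fin N) ℂ}
    (hX : X.PosSemidef) (hY : Y.PosSemidef) (r : ℕ) :
    (tensorPow (X + Y) r - tensorPow X r - tensorPow Y r).PosSemidef := by
  induction r with
  | zero =>
    simp only [tensorPow]
    erw [show X + Y - X - Y = (0 : Matrix (Fin N) (Fin N) ℂ) by abel]
    exact Matrix.PosSemidef.zero
  | succ r ih =>
    have key : tensorPow (X + Y) (r + 1) - tensorPow X (r + 1) - tensorPow Y (r + 1)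
        = (tensorPow (X + Y) r - tensorPow X r - tensorPow Y r) ⊗ₖ (X + Y)
          + tensorPow X r ⊗ₖ Y + tensorPow Y r ⊗ₖ X := by
      ext ⟨i, j⟩ ⟨k, l⟩
      simp only [tensorPow, Matrix.kroneckerMap_apply, Matrix.add_apply, Matrix.sub_apply]
      erw [Matrix.sub_apply, Matrix.sub_apply]
      simp only [Matrix.kroneckerMap_apply, Matrix.add_apply, Matrix.sub_apply]
      ring
    rw [key]
    exact ((aux_posSemidef_kronecker ih (hX.add hY)).add
      (aux_posSemidef_kronecker (aux_tensorPow_posSemidef hX r) hY)).add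
      (aux_posSemidef_kronecker (aux_tensorPow_posSemidef hY r) hX)

/-- For positive semidefinite `A, B, C` of the same size and every positive
integer `r`,
`⊗^r(A+B+C) + ⊗^r A + ⊗^r B + ⊗^r C ≥ ⊗^r(A+B) + ⊗^r(A+C) + ⊗^r(B+C)`
in the Loewner order. -/
theorem tensorPow_three_term_superadditive {N : ℕ}
    (A B C : Matrix (Fin N) (Fin N) ℂ)
    (hA : A.PosSemidef) (hB : B.PosSemidef) (hC : C.PosSemidef) (r : ℕ) :
    (tensorPow (A + B + C) r + tensorPow A r + tensorPow B r + tensorPow C r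
      - (tensorPow (A + B) r + tensorPow (A + C) r + tensorPow (B + C) r)).PosSemidef := by
  induction r with
  | zero =>
    simp only [tensorPow]
    have : A + B + C + A + B + C - (A + B + (A + C) + (B + C))
        = (0 : Matrix (Fin N) (Fin N) ℂ) := by abel
    erw [this]
    exact Matrix.PosSemidef.zero
  | succ r ih =>
    have key : tensorPow (A + B + C) (r + 1) + tensorPow A (r + 1) + tensorPow B (r + 1)
          + tensorPow C (r + 1)
        - (tensorPow (A + B) (r + 1) + tensorPow (A + C) (r + 1) + tensorPow (B + C) (r + 1))
        = (tensorPow (A + B + C) r + tensorPow A r + tensorPow B r + tensorPow C r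
            - (tensorPow (A + B) r + tensorPow (A + C) r + tensorPow (B + C) r)) ⊗ₖ (A + B + C)
          + (tensorPow (B + C) r - tensorPow B r - tensorPow C r) ⊗ₖ A
          + (tensorPow (A + C) r - tensorPow A r - tensorPow C r) ⊗ₖ B
          + (tensorPow (A + B) r - tensorPow A r - tensorPow B r) ⊗ₖ C := by
      ext ⟨i, j⟩ ⟨k, l⟩
      simp only [tensorPow, Matrix.kroneckerMap_apply, Matrix.add_apply, Matrix.sub_apply]
      erw [Matrix.sub_apply, Matrix.add_apply, Matrix.add_apply, Matrix.add_apply, Matrix.add_apply,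
        Matrix.add_apply]
      simp only [Matrix.kroneckerMap_apply, Matrix.add_apply, Matrix.sub_apply]
      ring
    rw [key]
    exact (((aux_posSemidef_kronecker ih ((hA.add hB).add hC)).add
      (aux_posSemidef_kronecker (aux_two_term hB hC r) hA)).add
      (aux_posSemidef_kronecker (aux_two_term hA hC r) hB)).add
      (aux_posSemidef_kronecker (aux_two_term hA hB r) hC)
end

section
/- Let A, B, C ∈ M_n(M_k) be positive semidefinite block matrices. Then det_1(A+B+C) + det_1 A + det_1 B + det_1 C ≥ det_1(A+B) + det_1(A+C) + det_1(B+C) in the Loewner order on M_k. -/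
open ComplexOrder

/-- The first partial determinant `det₁ H ∈ M_k` of a block matrix
`H ∈ M_n(M_k)`: its `(l,m)` entry is `det G_{lm}`, where `G_{lm} ∈ M_n` has
`(i,j)` entry `H((i,l),(j,m))`. -/
noncomputable def det1 {n k : ℕ}
    (H : Matrix (Fin n × Fin k) (Fin n × Fin k) ℂ) :
    Matrix (Fin k) (Fin k) ℂ :=
  Matrix.of fun l m => (Matrix.of fun i j : Fin n => H (i, l) (j, m)).det

namespace Det1SuperAdd

open Matrix Equiv Finset Function

private lemma prod_sum_expand {N : ℕ} {κ : Type*} [Fintype κ] (h : Fin N → κ → ℂ) :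
    (∏ j, ∑ c, h j c) = ∑ f : Fin N → κ, ∏ j, h j (f j) := by
  simpa using (MultilinearMap.mkPiAlgebra ℂ (Fin N) ℂ).map_sum h

noncomputable def ee {N : ℕ} (σ : Perm (Fin N)) : ℂ := ((Perm.sign σ : ℤ) : ℂ)

lemma ee_mul {N : ℕ} (σ τ : Perm (Fin N)) : ee (σ * τ) = ee σ * ee τ := by
  simp [ee, Units.val_mul]

lemma ee_sq {N : ℕ} (σ : Perm (Fin N)) : ee σ * ee σ = 1 := by
  rcases Int.units_eq_one_or (Perm.sign σ) with h | h <;> simp [ee, h]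

lemma star_ee {N : ℕ} (σ : Perm (Fin N)) : star (ee σ) = ee σ := by
  rcases Int.units_eq_one_or (Perm.sign σ) with h | h <;> simp [ee, h]

variable {n k : ℕ}

noncomputable def DD (M : Fin 3 → Matrix (Fin n × Fin k) (Fin n × Fin k) ℂ)
    (f : Fin n → Fin 3) (l m : Fin k) : ℂ :=
  (Matrix.of fun i j : Fin n => M (f j) (i, l) (j, m)).det

lemma det1_sum_expand (M : Fin 3 → Matrix (Fin n × Fin k) (Fin n × Fin k) ℂ)
    (s : Finset (Fin 3)) (l m : Fin k) :
    det1 (∑ c ∈ s, M c) l m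
      = ∑ f : Fin n → Fin 3, if ∀ i, f i ∈ s then DD M f l m else 0 := by
  classical
  show (Matrix.of fun i j : Fin n => (∑ c ∈ s, M c) (i, l) (j, m)).det = _
  rw [Matrix.det_apply']
  have h1 : ∀ σ : Perm (Fin n),
      (∏ j, (Matrix.of fun i j : Fin n => (∑ c ∈ s, M c) (i, l) (j, m)) (σ j) j)
      = ∑ f : Fin n → Fin 3, ∏ j, (if f j ∈ s then M (f j) ((σ j), l) (j, m) else 0) := by
    intro σ
    have h2 : ∀ j, (Matrix.of fun i j : Fin n => (∑ c ∈ s, M c) (i, l) (j, m)) (σ j) j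
        = ∑ c : Fin 3, (if c ∈ s then M c (σ j, l) (j, m) else 0) := by
      intro j
      rw [Finset.sum_ite_mem, Finset.univ_inter]
      simp [Matrix.sum_apply]
    rw [Finset.prod_congr rfl fun j _ => h2 j,
      prod_sum_expand fun j c => if c ∈ s then M c (σ j, l) (j, m) else 0]
  simp_rw [h1, Finset.mul_sum]
  rw [Finset.sum_comm]
  refine Finset.sum_congr rfl fun f _ => ?_
  by_cases hf : ∀ i, f i ∈ s
  · rw [if_pos hf, DD, Matrix.det_apply']
    refine Finset.sum_congr rfl fun σ _ => ?_
    congr 1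
    exact Finset.prod_congr rfl fun j _ => by rw [if_pos (hf j)]; simp
  · rw [if_neg hf]
    push_neg at hf
    obtain ⟨j0, hj0⟩ := hf
    refine Finset.sum_eq_zero fun σ _ => ?_
    have h3 : (∏ j, if f j ∈ s then M (f j) (σ j, l) (j, m) else 0) = 0 :=
      Finset.prod_eq_zero (Finset.mem_univ j0)
        (by rw [if_neg hj0] :
          (if f j0 ∈ s then M (f j0) (σ j0, l) (j0, m) else 0) = 0)
    rw [h3, mul_zero]

noncomputable def ZZ (W : Fin 3 → Matrix (Fin n × Fin k) (Fin n × Fin k) ℂ)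
    (f : Fin n → Fin 3) (x : Fin k → ℂ) (g : Fin n → Fin n × Fin k) : ℂ :=
  ∑ τ : Perm (Fin n), ∑ m : Fin k, ee τ * x m * ∏ i, W (f i) (g i) (τ i, m)

noncomputable def quad (M : Fin 3 → Matrix (Fin n × Fin k) (Fin n × Fin k) ℂ)
    (x : Fin k → ℂ) (f : Fin n → Fin 3) : ℂ :=
  ∑ l, ∑ m, star (x l) * (DD M f l m * x m)

lemma key_nonneg (M W : Fin 3 → Matrix (Fin n × Fin k) (Fin n × Fin k) ℂ)
    (hMW : ∀ c, M c = (W c)ᴴ * W c) (x : Fin k → ℂ) (f : Fin n → Fin 3) :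
    0 ≤ ∑ τ : Perm (Fin n), quad M x (f ∘ ⇑τ) := by
  classical
  have hentry : ∀ c a b, M c a b = ∑ st : Fin n × Fin k, star (W c st a) * W c st b := by
    intro c a b
    rw [hMW c, Matrix.mul_apply]
    exact Finset.sum_congr rfl fun st _ => by rw [Matrix.conjTranspose_apply]
  have hDD : ∀ (τ : Perm (Fin n)) (l m : Fin k),
      DD M (f ∘ ⇑τ) l m = ∑ ρ : Perm (Fin n), ∑ g : Fin n → Fin n × Fin k,
        ee ρ * ((∏ j, star (W (f (τ j)) (g j) (ρ j, l))) * (∏ j, W (f (τ j)) (g j) (j, m))) := by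
    intro τ l m
    rw [DD, Matrix.det_apply']
    refine Finset.sum_congr rfl fun ρ _ => ?_
    rw [← Finset.mul_sum]
    congr 1
    have h2 : ∀ j : Fin n, (Matrix.of fun i j : Fin n => M ((f ∘ ⇑τ) j) (i, l) (j, m)) (ρ j) j
        = ∑ st : Fin n × Fin k, star (W (f (τ j)) st (ρ j, l)) * W (f (τ j)) st (j, m) := by
      intro j; simpa using hentry (f (τ j)) (ρ j, l) (j, m)
    rw [Finset.prod_congr rfl fun j _ => h2 j,
      prod_sum_expand fun j st => star (W (f (τ j)) st (ρ j, l)) * W (f (τ j)) st (j, m)]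
    exact Finset.sum_congr rfl fun g _ => Finset.prod_mul_distrib
  have claimA : ∑ τ : Perm (Fin n), quad M x (f ∘ ⇑τ)
      = ∑ t : Perm (Fin n) × Fin k × Fin k × Perm (Fin n) × (Fin n → Fin n × Fin k),
        star (x t.2.1) * x t.2.2.1 * ee t.2.2.2.1
          * (∏ j, star (W (f (t.1 j)) (t.2.2.2.2 j) (t.2.2.2.1 j, t.2.1)))
          * (∏ j, W (f (t.1 j)) (t.2.2.2.2 j) (j, t.2.2.1)) := by
    simp only [Fintype.sum_prod_type]
    refine Finset.sum_congr rfl fun τ _ => ?_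
    rw [quad]
    simp_rw [hDD, Finset.sum_mul, Finset.mul_sum]
    refine Finset.sum_congr rfl fun l _ => Finset.sum_congr rfl fun m _ =>
      Finset.sum_congr rfl fun ρ _ => Finset.sum_congr rfl fun g _ => by ring
  have claimB : ∑ g : Fin n → Fin n × Fin k, star (ZZ W f x g) * ZZ W f x g
      = ∑ t : (Fin n → Fin n × Fin k) × Perm (Fin n) × Fin k × Perm (Fin n) × Fin k,
        (ee t.2.1 * star (x t.2.2.1) * ∏ i, star (W (f i) (t.1 i) (t.2.1 i, t.2.2.1)))
          * (ee t.2.2.2.1 * x t.2.2.2.2 * ∏ i, W (f i) (t.1 i) (t.2.2.2.1 i, t.2.2.2.2)) := by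
    simp only [Fintype.sum_prod_type]
    refine Finset.sum_congr rfl fun g _ => ?_
    have hstar : star (ZZ W f x g)
        = ∑ σ : Perm (Fin n), ∑ l : Fin k,
            ee σ * star (x l) * ∏ i, star (W (f i) (g i) (σ i, l)) := by
      rw [ZZ, star_sum]
      refine Finset.sum_congr rfl fun σ _ => ?_
      rw [star_sum]
      refine Finset.sum_congr rfl fun l _ => ?_
      rw [star_mul', star_mul', star_ee, star_prod]
    rw [hstar, ZZ, Finset.sum_mul]
    refine Finset.sum_congr rfl fun σ _ => ?_
    rw [Finset.sum_mul]
    refine Finset.sum_congr rfl fun l _ => ?_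
    rw [Finset.mul_sum]
    refine Finset.sum_congr rfl fun τ _ => ?_
    rw [Finset.mul_sum]
  have claimC : ∑ τ : Perm (Fin n), quad M x (f ∘ ⇑τ)
      = ∑ g : Fin n → Fin n × Fin k, star (ZZ W f x g) * ZZ W f x g := by
    rw [claimA, claimB]
    refine Fintype.sum_equiv
      (⟨fun t => (t.2.2.2.2 ∘ ⇑(t.1⁻¹), t.2.2.2.1 * t.1⁻¹, t.2.1, t.1⁻¹, t.2.2.1),
       fun t => (t.2.2.2.1⁻¹, t.2.2.1, t.2.2.2.2, t.2.1 * t.2.2.2.1⁻¹,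
         t.1 ∘ ⇑(t.2.2.2.1⁻¹)),
       ?_, ?_⟩ : (Perm (Fin n) × Fin k × Fin k × Perm (Fin n) × (Fin n → Fin n × Fin k))
         ≃ ((Fin n → Fin n × Fin k) × Perm (Fin n) × Fin k × Perm (Fin n) × Fin k))
       _ _ ?_
    · rintro ⟨τ, l, m, ρ, g⟩
      dsimp only
      refine Prod.ext ?_ (Prod.ext rfl (Prod.ext rfl (Prod.ext ?_ ?_)))
      · simp
      · simp [mul_assoc]
      · funext i; simp
    · rintro ⟨g, σ, l, τ, m⟩
      dsimp only
      refine Prod.ext ?_ (Prod.ext ?_ (Prod.ext rfl (Prod.ext ?_ rfl)))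
      · funext i; simp
      · simp [mul_assoc]
      · simp
    · rintro ⟨τ, l, m, ρ, g⟩
      dsimp only [Equiv.coe_fn_mk]
      have p1 : (∏ i, star (W (f i) ((g ∘ ⇑(τ⁻¹)) i) ((ρ * τ⁻¹) i, l)))
          = ∏ j, star (W (f (τ j)) (g j) (ρ j, l)) :=
        (Fintype.prod_bijective (⇑τ) τ.bijective _ _ fun j => by
          simp [Function.comp, Equiv.Perm.mul_apply]).symm
      have p2 : (∏ i, W (f i) ((g ∘ ⇑(τ⁻¹)) i) ((τ⁻¹) i, m))
          = ∏ j, W (f (τ j)) (g j) (j, m) :=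
        (Fintype.prod_bijective (⇑τ) τ.bijective _ _ fun j => by
          simp [Function.comp]).symm
      rw [p1, p2, ee_mul]
      have h4 : ee (τ⁻¹ : Perm (Fin n)) * ee (τ⁻¹ : Perm (Fin n)) = 1 := ee_sq _
      calc (star (x l) * x m * ee ρ * ∏ j, star (W (f (τ j)) (g j) (ρ j, l)))
            * ∏ j, W (f (τ j)) (g j) (j, m)
          = (ee (τ⁻¹ : Perm (Fin n)) * ee (τ⁻¹ : Perm (Fin n))) * ((star (x l) * x m * ee ρ
              * ∏ j, star (W (f (τ j)) (g j) (ρ j, l)))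
              * ∏ j, W (f (τ j)) (g j) (j, m)) := by rw [h4, one_mul]
        _ = _ := by ring
  rw [claimC]
  exact Finset.sum_nonneg fun g _ => star_mul_self_nonneg _

lemma combo (hn : 0 < n) (f : Fin n → Fin 3) (D : ℂ) :
    ((if ∀ i, f i ∈ ({0,1,2} : Finset (Fin 3)) then D else 0)
      + (if ∀ i, f i ∈ ({0} : Finset (Fin 3)) then D else 0)
      + (if ∀ i, f i ∈ ({1} : Finset (Fin 3)) then D else 0)
      + (if ∀ i, f i ∈ ({2} : Finset (Fin 3)) then D else 0))
      - ((if ∀ i, f i ∈ ({0,1} : Finset (Fin 3)) then D else 0)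
      + (if ∀ i, f i ∈ ({0,2} : Finset (Fin 3)) then D else 0)
      + (if ∀ i, f i ∈ ({1,2} : Finset (Fin 3)) then D else 0))
    = if Surjective f then D else 0 := by
  classical
  have hc : ∀ c : Fin 3, c = 0 ∨ c = 1 ∨ c = 2 := by decide
  have qs : Surjective f ↔ ((∃ i, f i = 0) ∧ (∃ i, f i = 1) ∧ (∃ i, f i = 2)) := by
    constructor
    · intro h; exact ⟨h 0, h 1, h 2⟩
    · rintro ⟨h0, h1, h2⟩ c
      rcases hc c with rfl | rfl | rfl
      exacts [h0, h1, h2]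
  have qgen : ∀ s : Finset (Fin 3), (∀ i, f i ∈ s) ↔
      (((0:Fin 3) ∈ s ∨ ¬(∃ i, f i = 0)) ∧ ((1:Fin 3) ∈ s ∨ ¬(∃ i, f i = 1))
        ∧ ((2:Fin 3) ∈ s ∨ ¬(∃ i, f i = 2))) := by
    intro s
    constructor
    · intro h
      have kk : ∀ c : Fin 3, c ∈ s ∨ ¬ (∃ i, f i = c) := by
        intro c
        by_cases hx : ∃ i, f i = c
        · obtain ⟨i, rfl⟩ := hx; exact Or.inl (h i)
        · exact Or.inr hx
      exact ⟨kk 0, kk 1, kk 2⟩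
    · rintro ⟨h0, h1, h2⟩ i
      rcases hc (f i) with hfi | hfi | hfi <;> rw [hfi]
      · rcases h0 with h | h
        · exact h
        · exact absurd ⟨i, hfi⟩ h
      · rcases h1 with h | h
        · exact h
        · exact absurd ⟨i, hfi⟩ h
      · rcases h2 with h | h
        · exact h
        · exact absurd ⟨i, hfi⟩ h
  simp only [qgen, qs]
  by_cases h0 : ∃ i, f i = 0 <;> by_cases h1 : ∃ i, f i = 1 <;> by_cases h2 : ∃ i, f i = 2
  all_goals try (simp [h0, h1, h2])
  · exfalso
    have i0 : Fin n := ⟨0, hn⟩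
    rcases hc (f i0) with h | h | h
    exacts [h0 ⟨i0, h⟩, h1 ⟨i0, h⟩, h2 ⟨i0, h⟩]

lemma det1_isHermitian {H : Matrix (Fin n × Fin k) (Fin n × Fin k) ℂ}
    (hH : H.IsHermitian) : (det1 H).IsHermitian := by
  refine Matrix.ext fun l m => ?_
  show star ((Matrix.of fun i j : Fin n => H (i, m) (j, l)).det)
      = (Matrix.of fun i j : Fin n => H (i, l) (j, m)).det
  rw [← Matrix.det_conjTranspose]
  congr 1
  ext i j
  show star (H (j, m) (i, l)) = H (i, l) (j, m)
  conv_rhs => rw [← hH]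
  rfl

lemma nonneg_of_nat_mul {c : ℕ} (hc : 0 < c) {z : ℂ} (h : 0 ≤ (c : ℂ) * z) : 0 ≤ z := by
  rw [Complex.le_def] at h ⊢
  simp only [Complex.zero_re, Complex.zero_im, Complex.mul_re, Complex.mul_im,
    Complex.natCast_re, Complex.natCast_im] at h ⊢
  have hc' : (0:ℝ) < c := by exact_mod_cast hc
  constructor
  · nlinarith [h.1]
  · nlinarith [h.2]

end Det1SuperAdd

open Det1SuperAdd Matrix Equiv Finset Function in
/-- For positive semidefinite `A, B, C ∈ M_n(M_k)`,
`det₁(A+B+C) + det₁ A + det₁ B + det₁ C ≥ det₁(A+B) + det₁(A+C) + det₁(B+C)`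
in the Loewner order on `M_k`. -/
theorem det1_three_term_superadditive {n k : ℕ}
    (A B C : Matrix (Fin n × Fin k) (Fin n × Fin k) ℂ)
    (hA : A.PosSemidef) (hB : B.PosSemidef) (hC : C.PosSemidef) :
    (det1 (A + B + C) + det1 A + det1 B + det1 C
      - (det1 (A + B) + det1 (A + C) + det1 (B + C))).PosSemidef := by
  classical
  rcases Nat.eq_zero_or_pos n with hn | hn
  · subst hn
    have hEq : (det1 (A + B + C) + det1 A + det1 B + det1 C
        - (det1 (A + B) + det1 (A + C) + det1 (B + C)))
        = (Matrix.of fun (_ : Fin 1) (_ : Fin k) => (1:ℂ))ᴴ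
          * (Matrix.of fun (_ : Fin 1) (_ : Fin k) => (1:ℂ)) := by
      ext l m
      simp [det1, Matrix.det_isEmpty, Matrix.mul_apply, Matrix.conjTranspose_apply,
        Matrix.add_apply, Matrix.sub_apply]
    rw [hEq]
    exact Matrix.posSemidef_conjTranspose_mul_self _
  · set M : Fin 3 → Matrix (Fin n × Fin k) (Fin n × Fin k) ℂ := ![A, B, C] with hM
    obtain ⟨W0, hW0⟩ := (by open scoped MatrixOrder Matrix.Norms.L2Operator in exact CStarAlgebra.nonneg_iff_eq_star_mul_self.mp hA.nonneg :
        ∃ B : Matrix (Fin n × Fin k) (Fin n × Fin k) ℂ, _ = Bᴴ * B)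
    obtain ⟨W1, hW1⟩ := (by open scoped MatrixOrder Matrix.Norms.L2Operator in exact CStarAlgebra.nonneg_iff_eq_star_mul_self.mp hB.nonneg :
        ∃ B : Matrix (Fin n × Fin k) (Fin n × Fin k) ℂ, _ = Bᴴ * B)
    obtain ⟨W2, hW2⟩ := (by open scoped MatrixOrder Matrix.Norms.L2Operator in exact CStarAlgebra.nonneg_iff_eq_star_mul_self.mp hC.nonneg :
        ∃ B : Matrix (Fin n × Fin k) (Fin n × Fin k) ℂ, _ = Bᴴ * B)
    have hMW : ∀ c, M c = (![W0, W1, W2] c)ᴴ * ![W0, W1, W2] c := by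
      intro c
      fin_cases c <;> simp [hM] <;> assumption
    have e012 : A + B + C = ∑ c ∈ ({0,1,2} : Finset (Fin 3)), M c := by
      simp only [hM]
      rw [Finset.sum_insert (by decide), Finset.sum_insert (by decide), Finset.sum_singleton]
      simp [← add_assoc]
    have e01 : A + B = ∑ c ∈ ({0,1} : Finset (Fin 3)), M c := by
      simp only [hM]
      rw [Finset.sum_insert (by decide), Finset.sum_singleton]
      simp
    have e02 : A + C = ∑ c ∈ ({0,2} : Finset (Fin 3)), M c := by
      simp only [hM]
      rw [Finset.sum_insert (by decide), Finset.sum_singleton]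
      simp
    have e12 : B + C = ∑ c ∈ ({1,2} : Finset (Fin 3)), M c := by
      simp only [hM]
      rw [Finset.sum_insert (by decide), Finset.sum_singleton]
      simp
    have e0 : A = ∑ c ∈ ({0} : Finset (Fin 3)), M c := by
      simp only [hM]; rw [Finset.sum_singleton]; simp
    have e1 : B = ∑ c ∈ ({1} : Finset (Fin 3)), M c := by
      simp only [hM]; rw [Finset.sum_singleton]; simp
    have e2 : C = ∑ c ∈ ({2} : Finset (Fin 3)), M c := by
      simp only [hM]; rw [Finset.sum_singleton]; simp
    have hEntry : ∀ l m, (det1 (A + B + C) + det1 A + det1 B + det1 C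
        - (det1 (A + B) + det1 (A + C) + det1 (B + C))) l m
        = ∑ f ∈ Finset.univ.filter (fun f : Fin n → Fin 3 => Surjective f), DD M f l m := by
      intro l m
      simp only [Matrix.sub_apply, Matrix.add_apply]
      rw [e012, e01, e02, e12, e0, e1, e2]
      simp only [det1_sum_expand]
      rw [Finset.sum_filter, ← Finset.sum_add_distrib, ← Finset.sum_add_distrib,
        ← Finset.sum_add_distrib, ← Finset.sum_add_distrib, ← Finset.sum_add_distrib,
        ← Finset.sum_sub_distrib]
      exact Finset.sum_congr rfl fun f _ => combo hn f (DD M f l m)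
    refine Matrix.posSemidef_iff_dotProduct_mulVec.mpr ⟨?_, ?_⟩
    · have hABC := det1_isHermitian ((hA.add hB).add hC).isHermitian
      have hA' := det1_isHermitian hA.isHermitian
      have hB' := det1_isHermitian hB.isHermitian
      have hC' := det1_isHermitian hC.isHermitian
      have hAB := det1_isHermitian (hA.add hB).isHermitian
      have hAC := det1_isHermitian (hA.add hC).isHermitian
      have hBC := det1_isHermitian (hB.add hC).isHermitian
      exact (((hABC.add hA').add hB').add hC').sub ((hAB.add hAC).add hBC)
    · intro x
      have hxx : star x ⬝ᵥ ((det1 (A + B + C) + det1 A + det1 B + det1 C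
          - (det1 (A + B) + det1 (A + C) + det1 (B + C))) *ᵥ x)
          = ∑ f ∈ Finset.univ.filter (fun f : Fin n → Fin 3 => Surjective f), quad M x f := by
        simp only [Matrix.mulVec, dotProduct, Pi.star_apply]
        simp_rw [hEntry, Finset.sum_mul, Finset.mul_sum]
        rw [Finset.sum_congr rfl fun l (_ : l ∈ Finset.univ) => Finset.sum_comm,
          Finset.sum_comm]
        rfl
      rw [hxx]
      have key : ∀ f : Fin n → Fin 3, 0 ≤ ∑ τ : Perm (Fin n), quad M x (f ∘ ⇑τ) :=
        fun f => key_nonneg M ![W0, W1, W2] hMW x f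
      have swap : ∀ τ : Perm (Fin n),
          (∑ f ∈ Finset.univ.filter (fun f : Fin n → Fin 3 => Surjective f), quad M x (f ∘ ⇑τ))
          = ∑ f ∈ Finset.univ.filter (fun f : Fin n → Fin 3 => Surjective f), quad M x f := by
        intro τ
        refine Finset.sum_nbij' (fun f => f ∘ ⇑τ) (fun f => f ∘ ⇑τ⁻¹) ?_ ?_ ?_ ?_ ?_
        · intro f hf
          simp only [Finset.mem_filter, Finset.mem_univ, true_and] at hf ⊢
          exact hf.comp τ.surjective
        · intro f hf
          simp only [Finset.mem_filter, Finset.mem_univ, true_and] at hf ⊢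
          exact hf.comp (τ⁻¹ : Perm (Fin n)).surjective
        · intro f _; funext i; simp
        · intro f _; funext i; simp
        · intro f _; rfl
      have h5 : (∑ τ : Perm (Fin n),
          ∑ f ∈ Finset.univ.filter (fun f : Fin n → Fin 3 => Surjective f), quad M x (f ∘ ⇑τ))
          = (Fintype.card (Perm (Fin n)))
            • ∑ f ∈ Finset.univ.filter (fun f : Fin n → Fin 3 => Surjective f), quad M x f := by
        rw [Finset.sum_congr rfl fun τ _ => swap τ, Finset.sum_const, Finset.card_univ]
      have h6 : (0:ℂ) ≤ ∑ τ : Perm (Fin n),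
          ∑ f ∈ Finset.univ.filter (fun f : Fin n → Fin 3 => Surjective f), quad M x (f ∘ ⇑τ) := by
        rw [Finset.sum_comm]
        exact Finset.sum_nonneg fun f _ => key f
      rw [h5, nsmul_eq_mul] at h6
      exact nonneg_of_nat_mul (by positivity) h6
end

section
/- Let A, B, C ∈ M_n(M_k) be positive semidefinite block matrices with blocks A_{ij}, B_{ij}, C_{ij} ∈ M_k. Then det_2(A+B+C) + det_2 A + det_2 B + det_2 C ≥ det_2(A+B) + det_2(A+C) + det_2(B+C) in the Loewner order on M_n. -/
open ComplexOrder Finset Equiv Matrix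


lemma psd_of_nat_smul {m : Type*} [Fintype m] [DecidableEq m] {M : Matrix m m ℂ} {c : ℕ}
    (hc : 0 < c) (h : ((c : ℂ) • M).PosSemidef) : M.PosSemidef := by
  have hc0 : (c : ℂ) ≠ 0 := Nat.cast_ne_zero.mpr hc.ne'
  have hinv : (0:ℂ) ≤ (c : ℂ)⁻¹ := by
    rw [show ((c:ℂ))⁻¹ = (((c:ℝ)⁻¹ : ℝ) : ℂ) by push_cast; ring]
    rw [Complex.zero_le_real]
    positivity
  have hM : M = (c : ℂ)⁻¹ • ((c : ℂ) • M) := by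
    rw [smul_smul, inv_mul_cancel₀ hc0, one_smul]
  rw [hM]
  constructor
  · rw [Matrix.IsHermitian, Matrix.conjTranspose_smul, h.1.eq]
    congr 1
    simp [star_inv₀, starRingEnd_apply]
  · intro x
    exact (h.smul hinv).2 x

/-- The second partial determinant `det₂ H = [det H_{ij}]_{i,j=1}^n ∈ M_n` of a
block matrix `H ∈ M_n(M_k)`, where `(H_{ij})_{lm} = H((i,l),(j,m))`. -/
noncomputable def det2 {n k : ℕ}
    (H : Matrix (Fin n × Fin k) (Fin n × Fin k) ℂ) :
    Matrix (Fin n) (Fin n) ℂ :=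
  Matrix.of fun i j => (Matrix.of fun l m : Fin k => H (i, l) (j, m)).det

noncomputable def mixed {n k : ℕ} (H : Fin 3 → Matrix (Fin n × Fin k) (Fin n × Fin k) ℂ)
    (f : Fin k → Fin 3) : Matrix (Fin n) (Fin n) ℂ :=
  Matrix.of fun i j => (Matrix.of fun l m : Fin k => H (f m) (i, l) (j, m)).det

lemma det2_sum_eq {n k : ℕ} (H : Fin 3 → Matrix (Fin n × Fin k) (Fin n × Fin k) ℂ)
    (S : Finset (Fin 3)) :
    det2 (∑ p ∈ S, H p) = ∑ f ∈ Fintype.piFinset (fun _ : Fin k => S), mixed H f := by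
  ext i j
  simp only [det2, mixed, Matrix.sum_apply, Matrix.of_apply, Matrix.det_apply']
  calc (∑ σ : Equiv.Perm (Fin k), ((Equiv.Perm.sign σ : ℤ) : ℂ) * ∏ m, ∑ p ∈ S, H p (i, σ m) (j, m))
      = ∑ σ : Equiv.Perm (Fin k), ((Equiv.Perm.sign σ : ℤ) : ℂ) *
          ∑ f ∈ Fintype.piFinset (fun _ : Fin k => S), ∏ m, H (f m) (i, σ m) (j, m) := by
        refine Finset.sum_congr rfl fun σ _ => ?_
        rw [Finset.prod_univ_sum]
    _ = ∑ f ∈ Fintype.piFinset (fun _ : Fin k => S),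
          ∑ σ : Equiv.Perm (Fin k), ((Equiv.Perm.sign σ : ℤ) : ℂ) * ∏ m, H (f m) (i, σ m) (j, m) := by
        rw [Finset.sum_comm]
        simp [Finset.mul_sum]

def Tpred {k : ℕ} (f : Fin k → Fin 3) : Prop :=
  ((∀ m, f m ≠ 0) ∧ (∀ m, f m ≠ 1) ∧ (∀ m, f m ≠ 2)) ∨
    (¬ (∀ m, f m ≠ 0) ∧ ¬ (∀ m, f m ≠ 1) ∧ ¬ (∀ m, f m ≠ 2))

instance {k : ℕ} : DecidablePred (Tpred (k := k)) := fun _ => by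
  unfold Tpred; infer_instance

def Tset (k : ℕ) : Finset (Fin k → Fin 3) := Finset.univ.filter Tpred

lemma combo {n k : ℕ} (H : Fin 3 → Matrix (Fin n × Fin k) (Fin n × Fin k) ℂ) :
    det2 (H 0 + H 1 + H 2) + det2 (H 0) + det2 (H 1) + det2 (H 2)
      - (det2 (H 0 + H 1) + det2 (H 0 + H 2) + det2 (H 1 + H 2))
    = ∑ f ∈ Tset k, mixed H f := by
  have e012 : H 0 + H 1 + H 2 = ∑ p ∈ (Finset.univ : Finset (Fin 3)), H p := by
    simp [Fin.sum_univ_three]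
  have e0 : H 0 = ∑ p ∈ ({0} : Finset (Fin 3)), H p := by simp
  have e1 : H 1 = ∑ p ∈ ({1} : Finset (Fin 3)), H p := by simp
  have e2 : H 2 = ∑ p ∈ ({2} : Finset (Fin 3)), H p := by simp
  have e01 : H 0 + H 1 = ∑ p ∈ ({0, 1} : Finset (Fin 3)), H p := by
    rw [Finset.sum_insert (by decide), Finset.sum_singleton]
  have e02 : H 0 + H 2 = ∑ p ∈ ({0, 2} : Finset (Fin 3)), H p := by
    rw [Finset.sum_insert (by decide), Finset.sum_singleton]
  have e12 : H 1 + H 2 = ∑ p ∈ ({1, 2} : Finset (Fin 3)), H p := by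
    rw [Finset.sum_insert (by decide), Finset.sum_singleton]
  rw [e012, e01, e02, e12, e0, e1, e2]
  rw [det2_sum_eq, det2_sum_eq, det2_sum_eq, det2_sum_eq, det2_sum_eq, det2_sum_eq, det2_sum_eq]
  have key : ∀ S : Finset (Fin 3),
      ∑ f ∈ Fintype.piFinset (fun _ : Fin k => S), mixed H f
        = ∑ f : Fin k → Fin 3, if (∀ m, f m ∈ S) then mixed H f else 0 := by
    intro S
    rw [← Finset.sum_filter]
    congr 1
    ext f
    simp [Fintype.mem_piFinset]
  rw [key, key, key, key, key, key, key]
  have Tkey : ∑ f ∈ Tset k, mixed H f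
      = ∑ f : Fin k → Fin 3, if Tpred f then mixed H f else 0 := by
    rw [← Finset.sum_filter]; rfl
  rw [Tkey]
  rw [← Finset.sum_add_distrib, ← Finset.sum_add_distrib, ← Finset.sum_add_distrib,
    ← Finset.sum_add_distrib, ← Finset.sum_add_distrib, ← Finset.sum_sub_distrib]
  refine Finset.sum_congr rfl fun f _ => ?_
  have m0 : ∀ g : Fin 3, g ∈ ({0} : Finset (Fin 3)) ↔ (g ≠ 1 ∧ g ≠ 2) := by decide
  have m1 : ∀ g : Fin 3, g ∈ ({1} : Finset (Fin 3)) ↔ (g ≠ 0 ∧ g ≠ 2) := by decide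
  have m2 : ∀ g : Fin 3, g ∈ ({2} : Finset (Fin 3)) ↔ (g ≠ 0 ∧ g ≠ 1) := by decide
  have m01 : ∀ g : Fin 3, g ∈ ({0, 1} : Finset (Fin 3)) ↔ g ≠ 2 := by decide
  have m02 : ∀ g : Fin 3, g ∈ ({0, 2} : Finset (Fin 3)) ↔ g ≠ 1 := by decide
  have m12 : ∀ g : Fin 3, g ∈ ({1, 2} : Finset (Fin 3)) ↔ g ≠ 0 := by decide
  simp only [m0, m1, m2, m01, m02, m12, Finset.mem_univ, forall_const, if_true,
    forall_and, Tpred]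
  by_cases h0 : ∀ m, f m ≠ 0 <;> by_cases h1 : ∀ m, f m ≠ 1 <;> by_cases h2 : ∀ m, f m ≠ 2 <;>
    simp [h0, h1, h2] <;> abel

variable {n k : ℕ}

def wfun (Bg : Fin 3 → Matrix (Fin n × Fin k) (Fin n × Fin k) ℂ)
    (f : Fin k → Fin 3) (t : Fin k → Fin n × Fin k) (j : Fin n) : ℂ :=
  ∏ m, Bg (f m) (t m) (j, m)

lemma sign_cast_mul_cancel (σ ρ : Equiv.Perm (Fin k)) :
    ((Equiv.Perm.sign σ : ℤ) : ℂ) * ((Equiv.Perm.sign (σ * ρ) : ℤ) : ℂ)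
      = ((Equiv.Perm.sign ρ : ℤ) : ℂ) := by
  rcases Int.units_eq_one_or (Equiv.Perm.sign σ) with h | h <;> rw [_root_.map_mul, h] <;> push_cast <;>
    ring

lemma wfun_reindex (Bg : Fin 3 → Matrix (Fin n × Fin k) (Fin n × Fin k) ℂ)
    (f : Fin k → Fin 3) (t : Fin k → Fin n × Fin k) (i : Fin n) (σ : Equiv.Perm (Fin k)) :
    ∏ m, Bg (f m) (t m) (i, σ m) = wfun Bg (f ∘ ⇑σ⁻¹) (t ∘ ⇑σ⁻¹) i := by
  exact Fintype.prod_equiv σ _ (fun m' => Bg (f (σ⁻¹ m')) (t (σ⁻¹ m')) (i, m'))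
    (fun m => by simp)

lemma detexp (Bg : Fin 3 → Matrix (Fin n × Fin k) (Fin n × Fin k) ℂ)
    (f : Fin k → Fin 3) (i j : Fin n) :
    (mixed (fun p => (Bg p)ᴴ * Bg p) f) i j
      = ∑ t : Fin k → Fin n × Fin k, ∑ σ : Equiv.Perm (Fin k),
          ((Equiv.Perm.sign σ : ℤ) : ℂ) *
            (star (wfun Bg (f ∘ ⇑σ⁻¹) (t ∘ ⇑σ⁻¹) i) * wfun Bg f t j) := by
  rw [mixed]
  simp only [Matrix.of_apply, Matrix.det_apply']
  rw [Finset.sum_comm]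
  refine Finset.sum_congr rfl fun σ _ => ?_
  simp only [Matrix.of_apply, Matrix.mul_apply, Matrix.conjTranspose_apply]
  rw [Finset.prod_univ_sum]
  rw [Fintype.piFinset_univ, Finset.mul_sum]
  refine Finset.sum_congr rfl fun t _ => ?_
  rw [Finset.prod_mul_distrib, ← star_prod, wfun_reindex]
  rfl

noncomputable def Efun (Bg : Fin 3 → Matrix (Fin n × Fin k) (Fin n × Fin k) ℂ)
    (T : Finset (Fin k → Fin 3)) (i j : Fin n) : ℂ :=
  ∑ x : ((Fin k → Fin 3) × (Fin k → Fin n × Fin k)) × Equiv.Perm (Fin k),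
    if x.1.1 ∈ T then
      ((Equiv.Perm.sign x.2 : ℤ) : ℂ) *
        (star (wfun Bg x.1.1 x.1.2 i) * wfun Bg (x.1.1 ∘ ⇑x.2) (x.1.2 ∘ ⇑x.2) j)
    else 0

def shiftEquiv (n k : ℕ) :
    (((Fin k → Fin 3) × (Fin k → Fin n × Fin k)) × Equiv.Perm (Fin k)) ≃
    (((Fin k → Fin 3) × (Fin k → Fin n × Fin k)) × Equiv.Perm (Fin k)) where
  toFun x := ((x.1.1 ∘ ⇑x.2, x.1.2 ∘ ⇑x.2), x.2)
  invFun x := ((x.1.1 ∘ ⇑x.2⁻¹, x.1.2 ∘ ⇑x.2⁻¹), x.2)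
  left_inv x := by
    obtain ⟨⟨f, t⟩, σ⟩ := x
    simp only [Prod.mk.injEq]
    refine ⟨⟨?_, ?_⟩, trivial⟩ <;> funext m <;> simp
  right_inv x := by
    obtain ⟨⟨f, t⟩, σ⟩ := x
    simp only [Prod.mk.injEq]
    refine ⟨⟨?_, ?_⟩, trivial⟩ <;> funext m <;> simp

lemma L1 (Bg : Fin 3 → Matrix (Fin n × Fin k) (Fin n × Fin k) ℂ)
    (T : Finset (Fin k → Fin 3))
    (hT : ∀ (σ : Equiv.Perm (Fin k)) (f : Fin k → Fin 3), f ∈ T ↔ f ∘ ⇑σ ∈ T)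
    (i j : Fin n) :
    (∑ f ∈ T, mixed (fun p => (Bg p)ᴴ * Bg p) f) i j = Efun Bg T i j := by
  have hE : Efun Bg T i j
      = ∑ x : ((Fin k → Fin 3) × (Fin k → Fin n × Fin k)) × Equiv.Perm (Fin k),
          (if x.1.1 ∈ T then
            ((Equiv.Perm.sign x.2 : ℤ) : ℂ) *
              (star (wfun Bg (x.1.1 ∘ ⇑x.2⁻¹) (x.1.2 ∘ ⇑x.2⁻¹) i) * wfun Bg x.1.1 x.1.2 j)
          else 0) := by
    rw [Efun]
    refine Fintype.sum_equiv (shiftEquiv n k) _ _ fun x => ?_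
    obtain ⟨⟨f, t⟩, σ⟩ := x
    have hc1 : (f ∘ ⇑σ) ∘ ⇑σ⁻¹ = f := by funext m; simp
    have hc2 : (t ∘ ⇑σ) ∘ ⇑σ⁻¹ = t := by funext m; simp
    simp only [shiftEquiv, Equiv.coe_fn_mk, hc1, hc2]
    exact if_congr (hT σ f) rfl rfl
  rw [hE, Matrix.sum_apply]
  rw [show ∑ f ∈ T, (mixed (fun p => (Bg p)ᴴ * Bg p) f) i j
      = ∑ f : Fin k → Fin 3,
          if f ∈ T then (mixed (fun p => (Bg p)ᴴ * Bg p) f) i j else 0 by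
    rw [Finset.sum_ite_mem, Finset.univ_inter]]
  rw [Fintype.sum_prod_type, Fintype.sum_prod_type]
  refine Finset.sum_congr rfl fun f _ => ?_
  by_cases hf : f ∈ T
  · simp only [hf, if_true, detexp]
  · simp [hf]

noncomputable def Zmat (Bg : Fin 3 → Matrix (Fin n × Fin k) (Fin n × Fin k) ℂ)
    (T : Finset (Fin k → Fin 3)) :
    Matrix ((Fin k → Fin 3) × (Fin k → Fin n × Fin k)) (Fin n) ℂ :=
  Matrix.of fun p j =>
    if p.1 ∈ T then
      ∑ σ : Equiv.Perm (Fin k),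
        ((Equiv.Perm.sign σ : ℤ) : ℂ) * wfun Bg (p.1 ∘ ⇑σ) (p.2 ∘ ⇑σ) j
    else 0

def quadEquiv (n k : ℕ) :
    ((((Fin k → Fin 3) × (Fin k → Fin n × Fin k)) × Equiv.Perm (Fin k)) × Equiv.Perm (Fin k)) ≃
    ((((Fin k → Fin 3) × (Fin k → Fin n × Fin k)) × Equiv.Perm (Fin k)) × Equiv.Perm (Fin k)) where
  toFun x := (((x.1.1.1 ∘ ⇑x.1.2⁻¹, x.1.1.2 ∘ ⇑x.1.2⁻¹), x.1.2), x.1.2 * x.2)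
  invFun x := (((x.1.1.1 ∘ ⇑x.1.2, x.1.1.2 ∘ ⇑x.1.2), x.1.2), x.1.2⁻¹ * x.2)
  left_inv x := by
    obtain ⟨⟨⟨f, t⟩, σ⟩, τ⟩ := x
    simp only [Prod.mk.injEq]
    refine ⟨⟨⟨?_, ?_⟩, trivial⟩, by group⟩ <;> funext m <;> simp
  right_inv x := by
    obtain ⟨⟨⟨f, t⟩, σ⟩, τ⟩ := x
    simp only [Prod.mk.injEq]
    refine ⟨⟨⟨?_, ?_⟩, trivial⟩, by group⟩ <;> funext m <;> simp

lemma L2 (Bg : Fin 3 → Matrix (Fin n × Fin k) (Fin n × Fin k) ℂ)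
    (T : Finset (Fin k → Fin 3))
    (hT : ∀ (σ : Equiv.Perm (Fin k)) (f : Fin k → Fin 3), f ∈ T ↔ f ∘ ⇑σ ∈ T)
    (i j : Fin n) :
    ((Zmat Bg T)ᴴ * Zmat Bg T) i j = (k.factorial : ℂ) * Efun Bg T i j := by
  classical
  have hR : ∑ x : (((Fin k → Fin 3) × (Fin k → Fin n × Fin k)) × Equiv.Perm (Fin k))
        × Equiv.Perm (Fin k),
      (if x.1.1.1 ∈ T then
        ((Equiv.Perm.sign x.2 : ℤ) : ℂ) *
          (star (wfun Bg x.1.1.1 x.1.1.2 i) * wfun Bg (x.1.1.1 ∘ ⇑x.2) (x.1.1.2 ∘ ⇑x.2) j)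
      else 0)
      = (k.factorial : ℂ) * Efun Bg T i j := by
    conv_lhs => rw [Fintype.sum_prod_type]
    conv_lhs => rw [Fintype.sum_prod_type]
    conv_rhs => rw [Efun]
    conv_rhs => rw [Fintype.sum_prod_type]
    rw [Finset.mul_sum]
    refine Finset.sum_congr rfl fun p _ => ?_
    dsimp only
    by_cases hp : p.1 ∈ T <;> simp [hp, Fintype.card_perm]
  rw [← hR]
  -- reindex the quadruple sum
  have hQ : ∑ x : (((Fin k → Fin 3) × (Fin k → Fin n × Fin k)) × Equiv.Perm (Fin k))
        × Equiv.Perm (Fin k),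
      (if x.1.1.1 ∈ T then
        ((Equiv.Perm.sign x.2 : ℤ) : ℂ) *
          (star (wfun Bg x.1.1.1 x.1.1.2 i) * wfun Bg (x.1.1.1 ∘ ⇑x.2) (x.1.1.2 ∘ ⇑x.2) j)
      else 0)
      = ∑ x : (((Fin k → Fin 3) × (Fin k → Fin n × Fin k)) × Equiv.Perm (Fin k))
          × Equiv.Perm (Fin k),
        (if x.1.1.1 ∈ T then
          (((Equiv.Perm.sign x.1.2 : ℤ) : ℂ) *
              star (wfun Bg (x.1.1.1 ∘ ⇑x.1.2) (x.1.1.2 ∘ ⇑x.1.2) i)) *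
            (((Equiv.Perm.sign x.2 : ℤ) : ℂ) *
              wfun Bg (x.1.1.1 ∘ ⇑x.2) (x.1.1.2 ∘ ⇑x.2) j)
        else 0) := by
    refine Fintype.sum_equiv (quadEquiv n k) _ _ fun x => ?_
    obtain ⟨⟨⟨f, t⟩, σ⟩, τ⟩ := x
    have hc1 : (f ∘ ⇑σ⁻¹) ∘ ⇑σ = f := by funext m; simp
    have hc2 : (t ∘ ⇑σ⁻¹) ∘ ⇑σ = t := by funext m; simp
    have hc3 : (f ∘ ⇑σ⁻¹) ∘ ⇑(σ * τ) = f ∘ ⇑τ := by funext m; simp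
    have hc4 : (t ∘ ⇑σ⁻¹) ∘ ⇑(σ * τ) = t ∘ ⇑τ := by funext m; simp
    simp only [quadEquiv, Equiv.coe_fn_mk, hc1, hc2, hc3, hc4]
    rw [if_congr (hT σ⁻¹ f) rfl rfl]
    refine if_congr Iff.rfl ?_ rfl
    rw [show (((Equiv.Perm.sign σ : ℤ) : ℂ) * star (wfun Bg f t i)) *
        (((Equiv.Perm.sign (σ * τ) : ℤ) : ℂ) * wfun Bg (f ∘ ⇑τ) (t ∘ ⇑τ) j)
        = (((Equiv.Perm.sign σ : ℤ) : ℂ) * ((Equiv.Perm.sign (σ * τ) : ℤ) : ℂ)) *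
          (star (wfun Bg f t i) * wfun Bg (f ∘ ⇑τ) (t ∘ ⇑τ) j) by ring,
      sign_cast_mul_cancel]
  rw [hQ]
  conv_rhs => rw [Fintype.sum_prod_type]
  conv_rhs => rw [Fintype.sum_prod_type]
  rw [Matrix.mul_apply]
  refine Finset.sum_congr rfl fun p _ => ?_
  simp only [Matrix.conjTranspose_apply, Zmat, Matrix.of_apply]
  by_cases hf : p.1 ∈ T
  · simp only [hf, if_true]
    rw [star_sum, Finset.sum_mul_sum]
    refine Finset.sum_congr rfl fun σ _ => Finset.sum_congr rfl fun τ _ => ?_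
    rw [star_mul']
    rw [show (star (((Equiv.Perm.sign σ : ℤ) : ℂ)) : ℂ) = (((Equiv.Perm.sign σ : ℤ) : ℂ))
      from star_intCast _]
  · simp [hf]

lemma key_psd (Bg : Fin 3 → Matrix (Fin n × Fin k) (Fin n × Fin k) ℂ)
    (T : Finset (Fin k → Fin 3))
    (hT : ∀ (σ : Equiv.Perm (Fin k)) (f : Fin k → Fin 3), f ∈ T ↔ f ∘ ⇑σ ∈ T) :
    (∑ f ∈ T, mixed (fun p => (Bg p)ᴴ * Bg p) f).PosSemidef := by
  have main : ((k.factorial : ℂ)) • (∑ f ∈ T, mixed (fun p => (Bg p)ᴴ * Bg p) f)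
      = (Zmat Bg T)ᴴ * Zmat Bg T := by
    ext i j
    rw [Matrix.smul_apply, L1 Bg T hT i j, L2 Bg T hT i j, smul_eq_mul]
  exact psd_of_nat_smul k.factorial_pos
    (by rw [main]; exact Matrix.posSemidef_conjTranspose_mul_self _)

/-- For positive semidefinite `A, B, C ∈ M_n(M_k)`,
`det₂(A+B+C) + det₂ A + det₂ B + det₂ C ≥ det₂(A+B) + det₂(A+C) + det₂(B+C)`
in the Loewner order on `M_n`. -/
theorem det2_three_term_superadditive {n k : ℕ}
    (A B C : Matrix (Fin n × Fin k) (Fin n × Fin k) ℂ)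
    (hA : A.PosSemidef) (hB : B.PosSemidef) (hC : C.PosSemidef) :
    (det2 (A + B + C) + det2 A + det2 B + det2 C
      - (det2 (A + B) + det2 (A + C) + det2 (B + C))).PosSemidef := by
  classical
  set H : Fin 3 → Matrix (Fin n × Fin k) (Fin n × Fin k) ℂ := ![A, B, C] with hH
  have hps : ∀ p, (H p).PosSemidef := by
    intro p
    fin_cases p <;> simpa [hH]
  have hex : ∀ p, ∃ Bp : Matrix (Fin n × Fin k) (Fin n × Fin k) ℂ, H p = Bpᴴ * Bp :=
    fun p => by
      open scoped MatrixOrder in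
      exact CStarAlgebra.nonneg_iff_eq_star_mul_self.mp (hps p).nonneg
  choose Bg hBg using hex
  have hHB : H = fun p => (Bg p)ᴴ * Bg p := funext hBg
  have h0 : H 0 = A := by simp [hH]
  have h1 : H 1 = B := by simp [hH]
  have h2 : H 2 = C := by simp [hH]
  have hcombo := combo H
  rw [h0, h1, h2] at hcombo
  rw [hcombo, hHB]
  have hfa : ∀ (c : Fin 3) (f : Fin k → Fin 3) (σ : Equiv.Perm (Fin k)),
      (∀ m, (f ∘ ⇑σ) m ≠ c) ↔ (∀ m, f m ≠ c) := by
    intro c f σ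
    constructor
    · intro h m
      have := h (σ⁻¹ m)
      simpa using this
    · intro h m
      exact h _
  refine key_psd Bg (Tset k) fun σ f => ?_
  simp only [Tset, Finset.mem_filter, Finset.mem_univ, true_and, Tpred, hfa]
end
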